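/- arXiv:math/0506219 — 12 statements merged into one kernel-verified Lean document; each statement's English description precedes it below -/
import Mathlib

section
/- If (θ_0,…,θ_d; θ*_0,…,θ*_d; φ_1,…,φ_d; ϕ_1,…,ϕ_d) is a parameter array of a Leonard pair with d ≥ 1, then for all 0 ≤ i ≤ d one has (θ_i − θ_{d−i})/(θ_0 − θ_d) = (θ*_i − θ*_{d−i})/(θ*_0 − θ*_d). -/
/-- A parameter array of diameter `d` (Terwilliger's classification conditions (i)-(v)). -/
structure ParameterArray (K : Type*) [Field K] (d : ℕ) where
  θ : ℕ → K
  θs : ℕ → K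
  φ : ℕ → K
  ϕ : ℕ → K
  φ_ne : ∀ i, 1 ≤ i → i ≤ d → φ i ≠ 0
  ϕ_ne : ∀ i, 1 ≤ i → i ≤ d → ϕ i ≠ 0
  θ_inj : ∀ i j, i ≤ d → j ≤ d → i ≠ j → θ i ≠ θ j
  θs_inj : ∀ i j, i ≤ d → j ≤ d → i ≠ j → θs i ≠ θs j
  eq_iii : ∀ i, 1 ≤ i → i ≤ d →
    φ i = ϕ 1 * (∑ h ∈ Finset.range i, (θ h - θ (d - h)) / (θ 0 - θ d))
      + (θs i - θs 0) * (θ (i - 1) - θ d)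
  eq_iv : ∀ i, 1 ≤ i → i ≤ d →
    ϕ i = φ 1 * (∑ h ∈ Finset.range i, (θ h - θ (d - h)) / (θ 0 - θ d))
      + (θs i - θs 0) * (θ (d - i + 1) - θ 0)
  indep : ∃ β : K, ∀ i, 2 ≤ i → i ≤ d - 1 →
    (θ (i - 2) - θ (i + 1)) / (θ (i - 1) - θ i) = β ∧
    (θs (i - 2) - θs (i + 1)) / (θs (i - 1) - θs i) = β

theorem stmt_0 {K : Type*} [Field K] {d : ℕ} (hd : 1 ≤ d) (P : ParameterArray K d) :
    ∀ i, i ≤ d →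
      (P.θ i - P.θ (d - i)) / (P.θ 0 - P.θ d)
        = (P.θs i - P.θs (d - i)) / (P.θs 0 - P.θs d) := by
  obtain ⟨β, hβ⟩ := P.indep
  set Δ : ℕ → K := fun h => P.θ h - P.θ (h + 1) with hΔdef
  set Δs : ℕ → K := fun h => P.θs h - P.θs (h + 1) with hΔsdef
  set D : ℕ → ℕ → K := fun h k => Δ h * Δs k - Δ k * Δs h with hDdef
  -- the three-term recurrence for the differences, from condition (v)
  have hrec : ∀ j, j + 3 ≤ d → Δ (j + 2) = (β - 1) * Δ (j + 1) - Δ j := by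
    intro j hj
    obtain ⟨h1, _⟩ := hβ (j + 2) (by omega) (by omega)
    rw [show j + 2 - 2 = j by omega, show j + 2 - 1 = j + 1 by omega] at h1
    have hne : P.θ (j + 1) - P.θ (j + 2) ≠ 0 :=
      sub_ne_zero.mpr (P.θ_inj (j + 1) (j + 2) (by omega) (by omega) (by omega))
    rw [div_eq_iff hne] at h1
    simp only [hΔdef]
    linear_combination h1
  have hrecs : ∀ j, j + 3 ≤ d → Δs (j + 2) = (β - 1) * Δs (j + 1) - Δs j := by
    intro j hj
    obtain ⟨_, h1⟩ := hβ (j + 2) (by omega) (by omega)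
    rw [show j + 2 - 2 = j by omega, show j + 2 - 1 = j + 1 by omega] at h1
    have hne : P.θs (j + 1) - P.θs (j + 2) ≠ 0 :=
      sub_ne_zero.mpr (P.θs_inj (j + 1) (j + 2) (by omega) (by omega) (by omega))
    rw [div_eq_iff hne] at h1
    simp only [hΔsdef]
    linear_combination h1
  have hDanti : ∀ h k, D h k = - D k h := by
    intro h k; simp only [hDdef]; ring
  -- the Wronskian-like quantity is shift invariant
  have hDshift : ∀ m k, m + k + 2 ≤ d → D (m + k + 1) (k + 1) = D (m + k) k := by
    intro m
    induction m using Nat.strong_induction_on with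
    | _ m ih =>
      match m with
      | 0 =>
        intro k _
        simp only [hDdef, Nat.zero_add]
        ring
      | 1 =>
        intro k hk
        have e1 : Δ (k + 2) = (β - 1) * Δ (k + 1) - Δ k := hrec k (by omega)
        have e2 : Δs (k + 2) = (β - 1) * Δs (k + 1) - Δs k := hrecs k (by omega)
        rw [show 1 + k + 1 = k + 2 by omega, show 1 + k = k + 1 by omega]
        simp only [hDdef]
        rw [e1, e2]
        ring
      | (m + 2) =>
        intro k hk
        have A : D (m + k + 2) (k + 1) = D (m + k + 1) k := by
          have := ih (m + 1) (by omega) k (by omega)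
          rwa [show m + 1 + k + 1 = m + k + 2 by omega,
               show m + 1 + k = m + k + 1 by omega] at this
        have B : D (m + k + 1) (k + 1) = D (m + k) k := ih m (by omega) k (by omega)
        have e1 : Δ (m + k + 3) = (β - 1) * Δ (m + k + 2) - Δ (m + k + 1) := by
          have := hrec (m + k + 1) (by omega)
          rwa [show m + k + 1 + 2 = m + k + 3 by omega,
               show m + k + 1 + 1 = m + k + 2 by omega] at this
        have e2 : Δs (m + k + 3) = (β - 1) * Δs (m + k + 2) - Δs (m + k + 1) := by
          have := hrecs (m + k + 1) (by omega)
          rwa [show m + k + 1 + 2 = m + k + 3 by omega,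
               show m + k + 1 + 1 = m + k + 2 by omega] at this
        have e3 : Δ (m + k + 2) = (β - 1) * Δ (m + k + 1) - Δ (m + k) := by
          have := hrec (m + k) (by omega)
          rwa [show m + k + 2 = m + k + 2 by omega,
               show m + k + 1 + 1 = m + k + 2 by omega] at this
        have e4 : Δs (m + k + 2) = (β - 1) * Δs (m + k + 1) - Δs (m + k) := by
          have := hrecs (m + k) (by omega)
          rwa [show m + k + 1 + 1 = m + k + 2 by omega] at this
        rw [show m + 2 + k + 1 = m + k + 3 by omega, show m + 2 + k = m + k + 2 by omega]
        simp only [hDdef] at A B ⊢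
        rw [e1, e2, e3, e4]
        rw [e3, e4] at A
        linear_combination (β - 1) * A - B
  have hshift0 : ∀ m t, m + t + 1 ≤ d → D (m + t) t = D m 0 := by
    intro m t
    induction t with
    | zero => intro _; rfl
    | succ t ih =>
      intro h
      have h1 : D (m + t + 1) (t + 1) = D (m + t) t := hDshift m t (by omega)
      rw [show m + (t + 1) = m + t + 1 by omega, h1]
      exact ih (by omega)
  have hrefl' : ∀ h k, k ≤ h → h < d → D h k = D (h - k) 0 := by
    intro h k hkh hhd
    have := hshift0 (h - k) k (by omega)
    rwa [show h - k + k = h by omega] at this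
  have hrefl : ∀ h k, h < d → k < d → D (d - 1 - h) (d - 1 - k) = - D h k := by
    intro h k hh hk
    rcases le_or_gt k h with hle | hlt
    · have e1 : D h k = D (h - k) 0 := hrefl' h k hle hh
      have e2 : D (d - 1 - k) (d - 1 - h) = D (h - k) 0 := by
        have := hrefl' (d - 1 - k) (d - 1 - h) (by omega) (by omega)
        rwa [show d - 1 - k - (d - 1 - h) = h - k by omega] at this
      rw [hDanti (d - 1 - h) (d - 1 - k), e2, e1]
    · have e1 : D (d - 1 - h) (d - 1 - k) = D (k - h) 0 := by
        have := hrefl' (d - 1 - h) (d - 1 - k) (by omega) (by omega)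
        rwa [show d - 1 - h - (d - 1 - k) = k - h by omega] at this
      have e2 : D k h = D (k - h) 0 := hrefl' k h (by omega) hk
      rw [e1, hDanti h k, ← e2, neg_neg]
  have hrow : ∀ i, i < d →
      (∑ k ∈ Finset.range d, D (d - 1 - i) k) = - ∑ k ∈ Finset.range d, D i k := by
    intro i hi
    calc ∑ k ∈ Finset.range d, D (d - 1 - i) k
        = ∑ k ∈ Finset.range d, D (d - 1 - i) (d - 1 - k) :=
          (Finset.sum_range_reflect (fun k => D (d - 1 - i) k) d).symm
      _ = ∑ k ∈ Finset.range d, - D i k :=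
          Finset.sum_congr rfl (fun k hk => hrefl i k hi (Finset.mem_range.mp hk))
      _ = - ∑ k ∈ Finset.range d, D i k := by
          rw [Finset.sum_neg_distrib]
  have hT : P.θ 0 - P.θ d = ∑ k ∈ Finset.range d, Δ k := by
    simp only [hΔdef]
    exact (Finset.sum_range_sub' (fun k => P.θ k) d).symm
  have hTs : P.θs 0 - P.θs d = ∑ k ∈ Finset.range d, Δs k := by
    simp only [hΔsdef]
    exact (Finset.sum_range_sub' (fun k => P.θs k) d).symm
  have main : ∀ i, i ≤ d →
      (P.θ i - P.θ (d - i)) * (P.θs 0 - P.θs d)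
        = (P.θs i - P.θs (d - i)) * (P.θ 0 - P.θ d) := by
    intro i
    induction i with
    | zero => intro _; rw [Nat.sub_zero]; ring
    | succ i ih =>
      intro hi
      have G := ih (by omega)
      set j := d - (i + 1) with hjdef
      have hj : d - i = j + 1 := by omega
      have hsum : (Δ i + Δ j) * (P.θs 0 - P.θs d) - (Δs i + Δs j) * (P.θ 0 - P.θ d) = 0 := by
        rw [hT, hTs, Finset.mul_sum, Finset.mul_sum, ← Finset.sum_sub_distrib]
        have hpt : ∀ k ∈ Finset.range d,
            ((Δ i + Δ j) * Δs k - (Δs i + Δs j) * Δ k) = D i k + D j k := by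
          intro k _; simp only [hDdef]; ring
        rw [Finset.sum_congr rfl hpt, Finset.sum_add_distrib,
            show j = d - 1 - i by omega, hrow i (by omega)]
        ring
      rw [hj] at G
      simp only [hΔdef, hΔsdef] at hsum
      linear_combination G - hsum
  intro i hi
  have h0d : P.θ 0 - P.θ d ≠ 0 :=
    sub_ne_zero.mpr (P.θ_inj 0 d (by omega) le_rfl (by omega))
  have h0ds : P.θs 0 - P.θs d ≠ 0 :=
    sub_ne_zero.mpr (P.θs_inj 0 d (by omega) le_rfl (by omega))
  rw [div_eq_div_iff h0d h0ds]
  exact main i hi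
end

section
/- Let d ≥ 1 and let (θ_i; θ*_i; φ_i; ϕ_i) be a parameter array. With a_0 = θ_0 + φ_1/(θ*_0 − θ*_1) and a_d = θ_d + φ_d/(θ*_d − θ*_{d−1}), one has a_0 − a_d = (θ_0 − θ_1)(θ*_0 − θ*_d)/(θ*_{d−1} − θ*_d) + φ_1/(θ*_0 − θ*_1) + φ_1/(θ*_{d−1} − θ*_d). -/
private lemma aux_pack {K : Type*} [Field K] (f g : ℕ → K) (d : ℕ) (β : K)
    (hβ : β ≠ 3)
    (hru : ∀ m, m + 3 ≤ d → f m - f (m + 3) = β * (f (m + 1) - f (m + 2)))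
    (hrv : ∀ m, m + 3 ≤ d → g m - g (m + 3) = β * (g (m + 1) - g (m + 2))) :
    ∀ n, 1 ≤ n → n + 2 ≤ d →
      ((f 0 - f 1 + (f n - f (n + 1))) * (g 0 - g (n + 1))
         = (g 0 - g 1 + (g n - g (n + 1))) * (f 0 - f (n + 1)))
      ∧ ((f 0 - f 1 + (f (n + 1) - f (n + 2))) * (g 0 - g (n + 2))
         = (g 0 - g 1 + (g (n + 1) - g (n + 2))) * (f 0 - f (n + 2)))
      ∧ ((β - 3) * (f 0 - f (n + 1))
         = (β - 2) * (f 0 - f 1) + (f (n + 1) - f (n + 2)) - (f n - f (n + 1)) - (f 1 - f 2))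
      ∧ ((β - 3) * (g 0 - g (n + 1))
         = (β - 2) * (g 0 - g 1) + (g (n + 1) - g (n + 2)) - (g n - g (n + 1)) - (g 1 - g 2))
      ∧ ((f n - f (n + 1)) * (g 0 - g 1) + (f 1 - f 2) * (g (n + 1) - g (n + 2))
         = (f 0 - f 1) * (g n - g (n + 1)) + (f (n + 1) - f (n + 2)) * (g 1 - g 2))
      ∧ ((f n - f (n + 1)) * (g (n + 1) - g (n + 2)) - (f (n + 1) - f (n + 2)) * (g n - g (n + 1))
         = (f 0 - f 1) * (g 1 - g 2) - (f 1 - f 2) * (g 0 - g 1)) := by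
  have hβ' : β - 3 ≠ 0 := sub_ne_zero.mpr hβ
  intro n hn
  induction n, hn using Nat.le_induction with
  | base =>
    intro hd3
    have r0 := hru 0 (by omega)
    have s0 := hrv 0 (by omega)
    norm_num only
    have hL : (β - 3) * (f 0 - f 2)
        = (β - 2) * (f 0 - f 1) + (f 2 - f 3) - (f 1 - f 2) - (f 1 - f 2) := by
      linear_combination -r0
    have hLs : (β - 3) * (g 0 - g 2)
        = (β - 2) * (g 0 - g 1) + (g 2 - g 3) - (g 1 - g 2) - (g 1 - g 2) := by
      linear_combination -s0
    have hKp : (f 1 - f 2) * (g 0 - g 1) + (f 1 - f 2) * (g 2 - g 3)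
        = (f 0 - f 1) * (g 1 - g 2) + (f 2 - f 3) * (g 1 - g 2) := by
      linear_combination (f 1 - f 2) * s0 - (g 1 - g 2) * r0
    have hKc : (f 1 - f 2) * (g 2 - g 3) - (f 2 - f 3) * (g 1 - g 2)
        = (f 0 - f 1) * (g 1 - g 2) - (f 1 - f 2) * (g 0 - g 1) := by
      linear_combination (f 1 - f 2) * s0 - (g 1 - g 2) * r0
    have h0 : (β - 3) * ((f 0 - f 1 + (f 2 - f 3)) * (g 0 - g 3)
        - (g 0 - g 1 + (g 2 - g 3)) * (f 0 - f 3)) = 0 := by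
      linear_combination (-((g 2 - g 3) + (g 0 - g 1))) * hL
        + ((f 2 - f 3) + (f 0 - f 1)) * hLs + hKp + hKc
    have hC2 : (f 0 - f 1 + (f 2 - f 3)) * (g 0 - g 3)
        = (g 0 - g 1 + (g 2 - g 3)) * (f 0 - f 3) :=
      sub_eq_zero.mp ((mul_eq_zero.mp h0).resolve_left hβ')
    refine ⟨by ring, hC2, hL, hLs, hKp, hKc⟩
  | succ n hn ih =>
    intro hd
    obtain ⟨hC, hC1, hL, hLs, hKp, hKc⟩ := ih (by omega)
    have ru := hru n (by omega)
    have rv := hrv n (by omega)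
    have e2 : n + 1 + 1 = n + 2 := by omega
    have e3 : n + 1 + 2 = n + 3 := by omega
    rw [e2, e3]
    have hL1 : (β - 3) * (f 0 - f (n + 2))
        = (β - 2) * (f 0 - f 1) + (f (n + 2) - f (n + 3)) - (f (n + 1) - f (n + 2))
          - (f 1 - f 2) := by
      linear_combination hL - ru
    have hLs1 : (β - 3) * (g 0 - g (n + 2))
        = (β - 2) * (g 0 - g 1) + (g (n + 2) - g (n + 3)) - (g (n + 1) - g (n + 2))
          - (g 1 - g 2) := by
      linear_combination hLs - rv
    have hKc1 : (f (n + 1) - f (n + 2)) * (g (n + 2) - g (n + 3))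
        - (f (n + 2) - f (n + 3)) * (g (n + 1) - g (n + 2))
        = (f 0 - f 1) * (g 1 - g 2) - (f 1 - f 2) * (g 0 - g 1) := by
      linear_combination hKc - (g (n + 1) - g (n + 2)) * ru + (f (n + 1) - f (n + 2)) * rv
    have hKp1 : (f (n + 1) - f (n + 2)) * (g 0 - g 1)
        + (f 1 - f 2) * (g (n + 2) - g (n + 3))
        = (f 0 - f 1) * (g (n + 1) - g (n + 2)) + (f (n + 2) - f (n + 3)) * (g 1 - g 2) := by
      linear_combination (-(g 1 - g 2)) * ru + (f 1 - f 2) * rv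
        - ((g n - g (n + 1)) + (g 0 - g 1)) * hL + ((f n - f (n + 1)) + (f 0 - f 1)) * hLs
        + (β - 1) * hKp + hKc + (3 - β) * hC
    have h0 : (β - 3) * ((f 0 - f 1 + (f (n + 2) - f (n + 3))) * (g 0 - g (n + 3))
        - (g 0 - g 1 + (g (n + 2) - g (n + 3))) * (f 0 - f (n + 3))) = 0 := by
      linear_combination (-((g (n + 2) - g (n + 3)) + (g 0 - g 1))) * hL1
        + ((f (n + 2) - f (n + 3)) + (f 0 - f 1)) * hLs1 + hKp1 + hKc1
    have hC2 : (f 0 - f 1 + (f (n + 2) - f (n + 3))) * (g 0 - g (n + 3))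
        = (g 0 - g 1 + (g (n + 2) - g (n + 3))) * (f 0 - f (n + 3)) :=
      sub_eq_zero.mp ((mul_eq_zero.mp h0).resolve_left hβ')
    exact ⟨hC1, hC2, hL1, hLs1, hKp1, hKc1⟩

private lemma aux_three {K : Type*} [Field K] (f g : ℕ → K) (d : ℕ) (hd : 1 ≤ d)
    (hru : ∀ m, m + 3 ≤ d → f m - f (m + 3) = 3 * (f (m + 1) - f (m + 2)))
    (hrv : ∀ m, m + 3 ≤ d → g m - g (m + 3) = 3 * (g (m + 1) - g (m + 2))) :
    (f 0 - f 1 + (f (d - 1) - f d)) * (g 0 - g d)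
      = (g 0 - g 1 + (g (d - 1) - g d)) * (f 0 - f d) := by
  obtain ⟨n, rfl⟩ : ∃ n, d = n + 1 := ⟨d - 1, by omega⟩
  simp only [Nat.add_sub_cancel]
  -- arithmetic progression of differences
  have hu : ∀ (F : ℕ → K), (∀ m, m + 3 ≤ n + 1 → F m - F (m + 3) = 3 * (F (m + 1) - F (m + 2)))
      → ∀ k, k + 1 ≤ n + 1 → F k - F (k + 1)
        = (F 0 - F 1) + (k : K) * ((F 1 - F 2) - (F 0 - F 1)) := by
    intro F hF k
    induction k using Nat.strong_induction_on with
    | _ k ih =>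
      match k with
      | 0 => intro _; push_cast; ring
      | 1 => intro _; push_cast; ring
      | (m + 2) =>
        intro hk
        have h0 := ih m (by omega) (by omega)
        have h1 := ih (m + 1) (by omega) (by omega)
        have hr := hF m (by omega)
        push_cast at h0 h1 ⊢
        linear_combination hr + 2 * h1 - h0
  have hU : ∀ (F : ℕ → K), (∀ m, m + 3 ≤ n + 1 → F m - F (m + 3) = 3 * (F (m + 1) - F (m + 2)))
      → ∀ k, k ≤ n + 1 → F 0 - F k
        = (k : K) * (F 0 - F 1)
          + (∑ j ∈ Finset.range k, (j : K)) * ((F 1 - F 2) - (F 0 - F 1)) := by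
    intro F hF k
    induction k with
    | zero => intro _; simp
    | succ k ih =>
      intro hk
      have h1 := ih (by omega)
      have h2 := hu F hF k (by omega)
      rw [Finset.sum_range_succ]
      push_cast
      linear_combination h1 + h2
  have hg2 : (∑ j ∈ Finset.range (n + 1), (j : K)) * 2 = ((n : K) + 1) * (n : K) := by
    have h := Finset.sum_range_id_mul_two (n + 1)
    have h' : (((∑ i ∈ Finset.range (n + 1), i) * 2 : ℕ) : K)
        = (((n + 1) * (n + 1 - 1) : ℕ) : K) := by rw [h]
    rw [Nat.add_sub_cancel] at h'
    push_cast at h'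
    exact h'
  have hun := hu f hru n (by omega)
  have hvn := hu g hrv n (by omega)
  have hUf := hU f hru (n + 1) (by omega)
  have hUg := hU g hrv (n + 1) (by omega)
  push_cast at hUf hUg
  linear_combination (g 0 - g (n + 1)) * hun - (f 0 - f (n + 1)) * hvn
    + (2 * (f 0 - f 1) + (n : K) * ((f 1 - f 2) - (f 0 - f 1))) * hUg
    - (2 * (g 0 - g 1) + (n : K) * ((g 1 - g 2) - (g 0 - g 1))) * hUf
    + ((f 0 - f 1) * ((g 1 - g 2) - (g 0 - g 1))
        - (g 0 - g 1) * ((f 1 - f 2) - (f 0 - f 1))) * hg2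

theorem stmt_2 {K : Type*} [Field K] {d : ℕ} (hd : 1 ≤ d) (P : ParameterArray K d) :
    (P.θ 0 + P.φ 1 / (P.θs 0 - P.θs 1)) - (P.θ d + P.φ d / (P.θs d - P.θs (d - 1)))
      = (P.θ 0 - P.θ 1) * (P.θs 0 - P.θs d) / (P.θs (d - 1) - P.θs d)
        + P.φ 1 / (P.θs 0 - P.θs 1)
        + P.φ 1 / (P.θs (d - 1) - P.θs d) := by
  obtain ⟨β, hind⟩ := P.indep
  have hru : ∀ m, m + 3 ≤ d → P.θ m - P.θ (m + 3) = β * (P.θ (m + 1) - P.θ (m + 2)) := by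
    intro m hm
    have h := (hind (m + 2) (by omega) (by omega)).1
    rw [show m + 2 - 2 = m from by omega, show m + 2 - 1 = m + 1 from by omega,
      show m + 2 + 1 = m + 3 from by omega] at h
    have hne : P.θ (m + 1) - P.θ (m + 2) ≠ 0 :=
      sub_ne_zero.mpr (P.θ_inj (m + 1) (m + 2) (by omega) (by omega) (by omega))
    rw [div_eq_iff hne] at h
    exact h
  have hrv : ∀ m, m + 3 ≤ d → P.θs m - P.θs (m + 3) = β * (P.θs (m + 1) - P.θs (m + 2)) := by
    intro m hm
    have h := (hind (m + 2) (by omega) (by omega)).2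
    rw [show m + 2 - 2 = m from by omega, show m + 2 - 1 = m + 1 from by omega,
      show m + 2 + 1 = m + 3 from by omega] at h
    have hne : P.θs (m + 1) - P.θs (m + 2) ≠ 0 :=
      sub_ne_zero.mpr (P.θs_inj (m + 1) (m + 2) (by omega) (by omega) (by omega))
    rw [div_eq_iff hne] at h
    exact h
  have hC : (P.θ 0 - P.θ 1 + (P.θ (d - 1) - P.θ d)) * (P.θs 0 - P.θs d)
      = (P.θs 0 - P.θs 1 + (P.θs (d - 1) - P.θs d)) * (P.θ 0 - P.θ d) := by
    by_cases hβ : β = 3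
    · subst hβ
      exact aux_three P.θ P.θs d hd hru hrv
    · rcases Nat.lt_or_ge d 3 with hd3 | hd3
      · interval_cases d
        · norm_num
          ring
        · norm_num
          ring
      · have h := (aux_pack P.θ P.θs d β hβ hru hrv (d - 2) (by omega) (by omega)).2.1
        rw [show d - 2 + 1 = d - 1 from by omega, show d - 2 + 2 = d from by omega] at h
        exact h
  have ht0d : P.θ 0 - P.θ d ≠ 0 :=
    sub_ne_zero.mpr (P.θ_inj 0 d (by omega) le_rfl (by omega))
  have hφ1 : P.φ 1 = P.ϕ 1 + (P.θs 1 - P.θs 0) * (P.θ 0 - P.θ d) := by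
    have h := P.eq_iii 1 le_rfl hd
    simp only [Finset.sum_range_one, Nat.sub_zero, Nat.sub_self] at h
    rw [div_self ht0d, mul_one] at h
    exact h
  have hsum1 : (∑ h ∈ Finset.range d, (P.θ h - P.θ (d - h)) / (P.θ 0 - P.θ d)) = 1 := by
    rw [← Finset.sum_div]
    have h2 : ∑ h ∈ Finset.range d, P.θ (d - h) = ∑ h ∈ Finset.range d, P.θ (h + 1) := by
      rw [← Finset.sum_range_reflect (fun j => P.θ (j + 1)) d]
      refine Finset.sum_congr rfl fun j hj => ?_
      have hj' := Finset.mem_range.mp hj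
      congr 1
      omega
    rw [Finset.sum_sub_distrib, h2, ← Finset.sum_sub_distrib, Finset.sum_range_sub' P.θ d,
      div_self ht0d]
  have hφd : P.φ d = P.ϕ 1 + (P.θs d - P.θs 0) * (P.θ (d - 1) - P.θ d) := by
    have h := P.eq_iii d hd le_rfl
    rw [hsum1, mul_one] at h
    exact h
  have h01 : P.θs 0 - P.θs 1 ≠ 0 :=
    sub_ne_zero.mpr (P.θs_inj 0 1 (by omega) hd (by omega))
  have hdd1 : P.θs d - P.θs (d - 1) ≠ 0 :=
    sub_ne_zero.mpr (P.θs_inj d (d - 1) le_rfl (by omega) (by omega))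
  have hd1d : P.θs (d - 1) - P.θs d ≠ 0 :=
    sub_ne_zero.mpr (P.θs_inj (d - 1) d (by omega) le_rfl (by omega))
  have hfd : P.φ d = (P.θ 0 - P.θ 1) * (P.θs 0 - P.θs d)
      - (P.θ 0 - P.θ d) * (P.θs (d - 1) - P.θs d) + P.φ 1 := by
    linear_combination hφd - hφ1 - hC
  rw [hfd]
  field_simp
  ring
end

section
/- Let d ≥ 1 and let (θ_i; θ*_i; φ_i; ϕ_i) be a parameter array. Define a_0, a_d, a*_0, a*_d by a_0 = θ_0 + φ_1/(θ*_0 − θ*_1), a_d = θ_d + φ_d/(θ*_d − θ*_{d−1}), a*_0 = θ*_0 + φ_1/(θ_0 − θ_1), a*_d = θ*_d + φ_d/(θ_d − θ_{d−1}). Then (a_0 − a_d)(θ*_0 − θ*_1)(θ*_{d−1} − θ*_d)/(θ*_0 − θ*_d) = (a*_0 − a*_d)(θ_0 − θ_1)(θ_{d−1} − θ_d)/(θ_0 − θ_d). -/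
/-!
Both sides equal `ϕ₁ ρ + (θ*₁ - θ*₀)(θ_{d-1} - θ_d)`, where `ρ` is either of
`(θ₀ - θ₁ + θ_{d-1} - θ_d) / (θ₀ - θ_d)` and `(θ*₀ - θ*₁ + θ*_{d-1} - θ*_d) / (θ*₀ - θ*_d)`;
the content is that these two ratios agree. By the β-condition the differences
`u_j = θ_j - θ_{j+1}` and `v_j = θ*_j - θ*_{j+1}` (`0 ≤ j ≤ d - 1`) solve the same recurrence
`w_{j+2} = x w_{j+1} - w_j`. Its characteristic polynomial is palindromic, so reversing a solution
gives a solution, and for two solutions `u_i v_j - v_i u_j` depends only on `j - i`. Hence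
`∑_j (u_0 v_j - v_0 u_j) = ∑_j (u_j v_n - v_j u_n)`, i.e. `(u_0 + u_n) ∑ v = (v_0 + v_n) ∑ u`, and
`∑ u = θ₀ - θ_d`, `∑ v = θ*₀ - θ*_d`.
-/

open Finset

theorem Finset.sum_range_sub_reflect {M : Type*} [AddCommGroup M] (f : ℕ → M) (d : ℕ) :
    ∑ h ∈ range d, (f h - f (d - h)) = f 0 - f d := by
  have hreflect : ∑ h ∈ range d, f (d - h) = ∑ h ∈ range d, f (h + 1) := by
    rw [← sum_range_reflect (fun j => f (j + 1)) d]
    exact sum_congr rfl fun h hh => by have := mem_range.mp hh; congr 1; omega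
  rw [sum_sub_distrib, hreflect, ← sum_sub_distrib, sum_range_sub']

def SolvesSymmRec {R : Type*} [CommRing R] (x : R) (n : ℕ) (u : ℕ → R) : Prop :=
  ∀ j, j + 2 ≤ n → u (j + 2) = x * u (j + 1) - u j

namespace SolvesSymmRec

variable {R : Type*} [CommRing R] {x : R} {n : ℕ} {u v : ℕ → R}

theorem mul_sub_mul (hu : SolvesSymmRec x n u) (hv : SolvesSymmRec x n v) (a b : R) :
    SolvesSymmRec x n (fun j => a * u j - b * v j) := fun j hj => by
  simp only [hu j hj, hv j hj]
  ring

theorem reverse (hu : SolvesSymmRec x n u) : SolvesSymmRec x n (fun j => u (n - j)) :=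
    fun j hj => by
  have h := hu (n - j - 2) (by omega)
  rw [show n - j - 2 + 2 = n - j by omega, show n - j - 2 + 1 = n - (j + 1) by omega,
    show n - j - 2 = n - (j + 2) by omega] at h
  linear_combination h

theorem eq_of_eq_zero_of_eq_one (hu : SolvesSymmRec x n u) (hv : SolvesSymmRec x n v)
    (h₀ : u 0 = v 0) (h₁ : u 1 = v 1) : ∀ j ≤ n, u j = v j := by
  intro j
  induction j using Nat.strong_induction_on with
  | _ j ih =>
    match j with
    | 0 => exact fun _ => h₀
    | 1 => exact fun _ => h₁
    | j + 2 =>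
      intro hj
      rw [hu j hj, hv j hj, ih j (by omega) (by omega), ih (j + 1) (by omega) (by omega)]

theorem casoratian_eq (hu : SolvesSymmRec x n u) (hv : SolvesSymmRec x n v) :
    ∀ j, j + 1 ≤ n → u j * v (j + 1) - v j * u (j + 1) = u 0 * v 1 - v 0 * u 1 := by
  intro j
  induction j with
  | zero => exact fun _ => rfl
  | succ j ih =>
    intro hj
    rw [← ih (by omega), hu j hj, hv j hj]
    ring

theorem add_mul_sum_eq (hu : SolvesSymmRec x n u) (hv : SolvesSymmRec x n v) :
    (u 0 + u n) * ∑ j ∈ range (n + 1), v j = (v 0 + v n) * ∑ j ∈ range (n + 1), u j := by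
  rcases Nat.eq_zero_or_pos n with rfl | hn
  · simp only [zero_add, sum_range_one]
    ring
  -- both sides solve the recurrence in `j`; at `j = 1` they agree by constancy of the Casoratian
  have hshift : ∀ j ≤ n, u 0 * v j - v 0 * u j = v n * u (n - j) - u n * v (n - j) :=
    eq_of_eq_zero_of_eq_one (hv.mul_sub_mul hu (u 0) (v 0))
      (hu.reverse.mul_sub_mul hv.reverse (v n) (u n))
      (by simp only [Nat.sub_zero]; ring)
      (by rw [← hu.casoratian_eq hv (n - 1) (by omega), Nat.sub_add_cancel hn]; ring)
  have hreflect : ∑ j ∈ range (n + 1), (u 0 * v j - v 0 * u j)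
      = ∑ j ∈ range (n + 1), (v n * u j - u n * v j) := by
    rw [← sum_range_reflect (fun j => v n * u j - u n * v j) (n + 1)]
    refine sum_congr rfl fun j hj => ?_
    rw [hshift j (by simpa [Nat.lt_succ_iff] using hj), add_tsub_cancel_right]
  simp only [sum_sub_distrib, ← mul_sum] at hreflect
  linear_combination hreflect

end SolvesSymmRec

theorem solvesSymmRec_sub_succ_of_div_eq {K : Type*} [Field K] {θ : ℕ → K} {β : K} {n : ℕ}
    (hne : ∀ i, i + 1 ≤ n → θ i ≠ θ (i + 1))
    (hβ : ∀ i, 2 ≤ i → i ≤ n → (θ (i - 2) - θ (i + 1)) / (θ (i - 1) - θ i) = β) :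
    SolvesSymmRec (β - 1) n (fun j => θ j - θ (j + 1)) := fun j hj => by
  have h := hβ (j + 2) (by omega) (by omega)
  rw [show j + 2 - 2 = j by omega, show j + 2 - 1 = j + 1 by omega,
    div_eq_iff (sub_ne_zero.mpr (hne (j + 1) (by omega)))] at h
  linear_combination h

namespace ParameterArray

variable {K : Type*} [Field K] {d : ℕ} (P : ParameterArray K d)

theorem θ_sub_ne_zero {i j : ℕ} (hi : i ≤ d) (hj : j ≤ d) (hij : i ≠ j) : P.θ i - P.θ j ≠ 0 :=
  sub_ne_zero.mpr (P.θ_inj i j hi hj hij)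

theorem θs_sub_ne_zero {i j : ℕ} (hi : i ≤ d) (hj : j ≤ d) (hij : i ≠ j) :
    P.θs i - P.θs j ≠ 0 :=
  sub_ne_zero.mpr (P.θs_inj i j hi hj hij)

theorem φ_one_eq (hd : 1 ≤ d) : P.φ 1 = P.ϕ 1 + (P.θs 1 - P.θs 0) * (P.θ 0 - P.θ d) := by
  have h := P.eq_iii 1 le_rfl hd
  rwa [sum_range_one, Nat.sub_zero, div_self (P.θ_sub_ne_zero (Nat.zero_le d) le_rfl (by omega)),
    mul_one] at h

theorem φ_diam_eq (hd : 1 ≤ d) :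
    P.φ d = P.ϕ 1 + (P.θs d - P.θs 0) * (P.θ (d - 1) - P.θ d) := by
  have h := P.eq_iii d hd le_rfl
  rwa [← sum_div, sum_range_sub_reflect,
    div_self (P.θ_sub_ne_zero (Nat.zero_le d) le_rfl (by omega)), mul_one] at h

theorem exists_solvesSymmRec : ∃ x : K,
    SolvesSymmRec x (d - 1) (fun j => P.θ j - P.θ (j + 1)) ∧
      SolvesSymmRec x (d - 1) (fun j => P.θs j - P.θs (j + 1)) := by
  obtain ⟨β, hβ⟩ := P.indep
  exact ⟨β - 1,
    solvesSymmRec_sub_succ_of_div_eq (fun i hi => P.θ_inj i (i + 1) (by omega) (by omega) (by omega))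
      fun i hi₂ hi => (hβ i hi₂ hi).1,
    solvesSymmRec_sub_succ_of_div_eq (fun i hi => P.θs_inj i (i + 1) (by omega) (by omega) (by omega))
      fun i hi₂ hi => (hβ i hi₂ hi).2⟩

theorem end_diff_ratio_eq (hd : 1 ≤ d) :
    (P.θs 0 - P.θs 1 + (P.θs (d - 1) - P.θs d)) / (P.θs 0 - P.θs d)
      = (P.θ 0 - P.θ 1 + (P.θ (d - 1) - P.θ d)) / (P.θ 0 - P.θ d) := by
  obtain ⟨x, hθ, hθs⟩ := P.exists_solvesSymmRec
  have h := hθ.add_mul_sum_eq hθs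
  simp only [sum_range_sub', Nat.sub_add_cancel hd] at h
  rw [div_eq_div_iff (P.θs_sub_ne_zero (Nat.zero_le d) le_rfl (by omega))
    (P.θ_sub_ne_zero (Nat.zero_le d) le_rfl (by omega))]
  linear_combination -h

theorem a_sub_mul_eq (hd : 1 ≤ d) :
    ((P.θ 0 + P.φ 1 / (P.θs 0 - P.θs 1)) - (P.θ d + P.φ d / (P.θs d - P.θs (d - 1))))
        * (P.θs 0 - P.θs 1) * (P.θs (d - 1) - P.θs d) / (P.θs 0 - P.θs d)
      = P.ϕ 1 * ((P.θs 0 - P.θs 1 + (P.θs (d - 1) - P.θs d)) / (P.θs 0 - P.θs d))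
        + (P.θs 1 - P.θs 0) * (P.θ (d - 1) - P.θ d) := by
  have h01 := P.θs_sub_ne_zero (Nat.zero_le d) hd (by omega)
  have hd1 := P.θs_sub_ne_zero (i := d) le_rfl (Nat.sub_le d 1) (by omega)
  have h0d := P.θs_sub_ne_zero (Nat.zero_le d) le_rfl (by omega)
  rw [P.φ_one_eq hd, P.φ_diam_eq hd]
  field_simp
  ring

theorem aStar_sub_mul_eq (hd : 1 ≤ d) :
    ((P.θs 0 + P.φ 1 / (P.θ 0 - P.θ 1)) - (P.θs d + P.φ d / (P.θ d - P.θ (d - 1))))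
        * (P.θ 0 - P.θ 1) * (P.θ (d - 1) - P.θ d) / (P.θ 0 - P.θ d)
      = P.ϕ 1 * ((P.θ 0 - P.θ 1 + (P.θ (d - 1) - P.θ d)) / (P.θ 0 - P.θ d))
        + (P.θs 1 - P.θs 0) * (P.θ (d - 1) - P.θ d) := by
  have h01 := P.θ_sub_ne_zero (Nat.zero_le d) hd (by omega)
  have hd1 := P.θ_sub_ne_zero (i := d) le_rfl (Nat.sub_le d 1) (by omega)
  have h0d := P.θ_sub_ne_zero (Nat.zero_le d) le_rfl (by omega)
  rw [P.φ_one_eq hd, P.φ_diam_eq hd]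
  field_simp
  ring

end ParameterArray

theorem stmt_3 {K : Type*} [Field K] {d : ℕ} (hd : 1 ≤ d) (P : ParameterArray K d) :
    ((P.θ 0 + P.φ 1 / (P.θs 0 - P.θs 1)) - (P.θ d + P.φ d / (P.θs d - P.θs (d - 1))))
        * (P.θs 0 - P.θs 1) * (P.θs (d - 1) - P.θs d) / (P.θs 0 - P.θs d)
      = ((P.θs 0 + P.φ 1 / (P.θ 0 - P.θ 1)) - (P.θs d + P.φ d / (P.θ d - P.θ (d - 1))))
          * (P.θ 0 - P.θ 1) * (P.θ (d - 1) - P.θ d) / (P.θ 0 - P.θ d) := by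
  rw [P.a_sub_mul_eq hd, P.aStar_sub_mul_eq hd, P.end_diff_ratio_eq hd]
end

section
/- Let d ≥ 1 and let (θ_i; θ*_i; φ_i; ϕ_i) be a parameter array. With a_0, a_d, a*_0, a*_d defined as usual (a_0 = θ_0 + φ_1/(θ*_0 − θ*_1), a_d = θ_d + φ_d/(θ*_d − θ*_{d−1}), a*_0 = θ*_0 + φ_1/(θ_0 − θ_1), a*_d = θ*_d + φ_d/(θ_d − θ_{d−1})), one has a_0 = a_d if and only if a*_0 = a*_d. -/
private def chebU {K : Type*} [Field K] (β : K) : ℕ → K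
  | 0 => 0
  | 1 => 1
  | (n+2) => (β - 1) * chebU β (n+1) - chebU β n

private lemma crossOne {K : Type*} [Field K] (β : K) (n : ℕ) (s t : ℕ → K)
    (hs : ∀ j, 1 ≤ j → j + 1 ≤ n → s (j+1) = (β - 1) * s j - s (j-1))
    (ht : ∀ j, 1 ≤ j → j + 1 ≤ n → t (j+1) = (β - 1) * t j - t (j-1)) :
    ∀ i, i + 1 ≤ n → s i * t (i+1) - s (i+1) * t i = s 0 * t 1 - s 1 * t 0 := by
  intro i
  induction i with
  | zero => intro _; rfl
  | succ m ih =>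
    intro h
    have h1 := hs (m+1) (by omega) (by omega)
    have h2 := ht (m+1) (by omega) (by omega)
    simp only [Nat.add_sub_cancel] at h1 h2
    have := ih (by omega)
    linear_combination s (m+1) * h2 - t (m+1) * h1 + this

private lemma cross {K : Type*} [Field K] (β : K) (n : ℕ) (s t : ℕ → K)
    (hs : ∀ j, 1 ≤ j → j + 1 ≤ n → s (j+1) = (β - 1) * s j - s (j-1))
    (ht : ∀ j, 1 ≤ j → j + 1 ≤ n → t (j+1) = (β - 1) * t j - t (j-1)) :
    ∀ k i, i + k ≤ n →
      s i * t (i+k) - s (i+k) * t i = (s 0 * t 1 - s 1 * t 0) * chebU β k := by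
  intro k
  induction k using Nat.strong_induction_on with
  | _ k ih =>
    match k with
    | 0 => intro i _; simp [chebU]
    | 1 =>
      intro i hi
      rw [chebU, mul_one]
      exact crossOne β n s t hs ht i hi
    | (m+2) =>
      intro i hi
      have h1 := hs (i+m+1) (by omega) (by omega)
      have h2 := ht (i+m+1) (by omega) (by omega)
      simp only [Nat.add_sub_cancel] at h1 h2
      have e1 := ih (m+1) (by omega) i (by omega)
      have e2 := ih m (by omega) i (by omega)
      have hi2 : i + (m+2) = (i+m+1)+1 := by omega
      have hi1 : i + (m+1) = i+m+1 := by omega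
      rw [hi2, chebU]
      rw [hi1] at e1
      linear_combination s i * h2 - t i * h1 + (β-1) * e1 - e2

private lemma starkey {K : Type*} [Field K] (β : K) (n : ℕ) (s t : ℕ → K)
    (hs : ∀ j, 1 ≤ j → j + 1 ≤ n → s (j+1) = (β - 1) * s j - s (j-1))
    (ht : ∀ j, 1 ≤ j → j + 1 ≤ n → t (j+1) = (β - 1) * t j - t (j-1)) :
    (∑ i ∈ Finset.range (n+1), t i) * (s 0 + s n)
      = (∑ i ∈ Finset.range (n+1), s i) * (t 0 + t n) := by
  set c := s 0 * t 1 - s 1 * t 0 with hc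
  have hC : ∀ i ≤ n, s 0 * t i - s i * t 0 = c * chebU β i := by
    intro i hi
    have := cross β n s t hs ht i 0 (by omega)
    simpa using this
  have hD : ∀ i ≤ n, s i * t n - s n * t i = c * chebU β (n - i) := by
    intro i hi
    have := cross β n s t hs ht (n - i) i (by omega)
    rwa [show i + (n - i) = n from by omega] at this
  have key : ∑ i ∈ Finset.range (n+1), (t i * (s 0 + s n) - s i * (t 0 + t n)) = 0 := by
    have h1 : ∑ i ∈ Finset.range (n+1), (t i * (s 0 + s n) - s i * (t 0 + t n))
        = ∑ i ∈ Finset.range (n+1), (c * chebU β i - c * chebU β (n - i)) := by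
      refine Finset.sum_congr rfl (fun i hi => ?_)
      have hi' := Finset.mem_range.mp hi
      have e1 := hC i (by omega)
      have e2 := hD i (by omega)
      linear_combination e1 - e2
    rw [h1, Finset.sum_sub_distrib]
    have h2 : (∑ i ∈ Finset.range (n+1), c * chebU β (n - i))
        = ∑ i ∈ Finset.range (n+1), c * chebU β i := by
      have := Finset.sum_range_reflect (fun i => c * chebU β i) (n+1)
      rw [← this]
      refine Finset.sum_congr rfl (fun i hi => ?_)
      have hi' := Finset.mem_range.mp hi
      rw [show n + 1 - 1 - i = n - i from by omega]
    rw [h2, sub_self]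
  rw [Finset.sum_sub_distrib, ← Finset.sum_mul, ← Finset.sum_mul] at key
  exact sub_eq_zero.mp key

theorem stmt_4 {K : Type*} [Field K] {d : ℕ} (hd : 1 ≤ d) (P : ParameterArray K d) :
    (P.θ 0 + P.φ 1 / (P.θs 0 - P.θs 1) = P.θ d + P.φ d / (P.θs d - P.θs (d - 1)))
      ↔ (P.θs 0 + P.φ 1 / (P.θ 0 - P.θ 1) = P.θs d + P.φ d / (P.θ d - P.θ (d - 1))) := by
  obtain ⟨θ, θs, φ, ϕ, φ_ne, ϕ_ne, θ_inj, θs_inj, eq_iii, eq_iv, indep⟩ := P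
  simp only at *
  obtain ⟨β, hβ⟩ := indep
  -- nonzero differences
  have hu : θ 0 - θ 1 ≠ 0 := sub_ne_zero.mpr (θ_inj 0 1 (by omega) hd (by omega))
  have hv : θ (d-1) - θ d ≠ 0 := sub_ne_zero.mpr (θ_inj (d-1) d (by omega) le_rfl (by omega))
  have hw : θ 0 - θ d ≠ 0 := sub_ne_zero.mpr (θ_inj 0 d (by omega) le_rfl (by omega))
  have hus : θs 0 - θs 1 ≠ 0 := sub_ne_zero.mpr (θs_inj 0 1 (by omega) hd (by omega))
  have hvs : θs (d-1) - θs d ≠ 0 := sub_ne_zero.mpr (θs_inj (d-1) d (by omega) le_rfl (by omega))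
  have hws : θs 0 - θs d ≠ 0 := sub_ne_zero.mpr (θs_inj 0 d (by omega) le_rfl (by omega))
  have hvs' : θs d - θs (d-1) ≠ 0 := sub_ne_zero.mpr (θs_inj d (d-1) le_rfl (by omega) (by omega))
  have hv' : θ d - θ (d-1) ≠ 0 := sub_ne_zero.mpr (θ_inj d (d-1) le_rfl (by omega) (by omega))
  -- the star identity
  have hs : ∀ j, 1 ≤ j → j + 1 ≤ d - 1 →
      (fun i => θ i - θ (i+1)) (j+1) = (β - 1) * (fun i => θ i - θ (i+1)) j
        - (fun i => θ i - θ (i+1)) (j-1) := by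
    intro j hj1 hj2
    obtain ⟨m, rfl⟩ := Nat.exists_eq_add_of_le' hj1
    have hne : θ (m+1) - θ (m+2) ≠ 0 :=
      sub_ne_zero.mpr (θ_inj (m+1) (m+2) (by omega) (by omega) (by omega))
    have h := (hβ (m+2) (by omega) (by omega)).1
    norm_num at h
    rw [div_eq_iff hne] at h
    simp only [Nat.add_sub_cancel]
    linear_combination h
  have ht : ∀ j, 1 ≤ j → j + 1 ≤ d - 1 →
      (fun i => θs i - θs (i+1)) (j+1) = (β - 1) * (fun i => θs i - θs (i+1)) j
        - (fun i => θs i - θs (i+1)) (j-1) := by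
    intro j hj1 hj2
    obtain ⟨m, rfl⟩ := Nat.exists_eq_add_of_le' hj1
    have hne : θs (m+1) - θs (m+2) ≠ 0 :=
      sub_ne_zero.mpr (θs_inj (m+1) (m+2) (by omega) (by omega) (by omega))
    have h := (hβ (m+2) (by omega) (by omega)).2
    norm_num at h
    rw [div_eq_iff hne] at h
    simp only [Nat.add_sub_cancel]
    linear_combination h
  have star := starkey β (d-1) (fun i => θ i - θ (i+1)) (fun i => θs i - θs (i+1)) hs ht
  simp only [show d - 1 + 1 = d from by omega] at star
  rw [Finset.sum_range_sub' θ, Finset.sum_range_sub' θs] at star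
  -- sums appearing in eq_iii
  have hS1 : (∑ h ∈ Finset.range 1, (θ h - θ (d - h)) / (θ 0 - θ d)) = 1 := by
    rw [Finset.sum_range_one]
    simp only [Nat.sub_zero]
    exact div_self hw
  have hSd : (∑ h ∈ Finset.range d, (θ h - θ (d - h)) / (θ 0 - θ d)) = 1 := by
    rw [← Finset.sum_div]
    have h1 : ∑ h ∈ Finset.range d, (θ h - θ (d - h))
        = (∑ h ∈ Finset.range d, θ h) - ∑ h ∈ Finset.range d, θ (d - h) := by
      rw [Finset.sum_sub_distrib]
    have h2 : (∑ h ∈ Finset.range d, θ (d - h)) = ∑ h ∈ Finset.range d, θ (h + 1) := by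
      rw [← Finset.sum_range_reflect (fun h => θ (h + 1)) d]
      refine Finset.sum_congr rfl (fun i hi => ?_)
      have := Finset.mem_range.mp hi
      rw [show d - 1 - i + 1 = d - i from by omega]
    have h3 : (∑ h ∈ Finset.range d, θ h) - (∑ h ∈ Finset.range d, θ (h + 1))
        = θ 0 - θ d := by
      rw [← Finset.sum_sub_distrib]
      exact Finset.sum_range_sub' θ d
    rw [h1, h2, h3]
    exact div_self hw
  have hA := eq_iii 1 le_rfl hd
  rw [hS1] at hA
  have hB := eq_iii d hd le_rfl
  rw [hSd] at hB
  simp only [Nat.sub_self, mul_one] at hA hB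
  constructor
  · intro h
    field_simp at h ⊢
    refine mul_left_cancel₀ hws ?_
    linear_combination (θ 0 - θ d) * h
      - ((θs 0 - θs d) * (θ (d-1) - θ d) - (θ 0 - θ d) * (θs (d-1) - θs d)) * hA
      - ((θs 0 - θs d) * (θ 0 - θ 1) - (θ 0 - θ d) * (θs 0 - θs 1)) * hB
      - ϕ 1 * star
  · intro h
    field_simp at h ⊢
    refine mul_left_cancel₀ hw ?_
    linear_combination (θs 0 - θs d) * h
      + ((θs 0 - θs d) * (θ (d-1) - θ d) - (θ 0 - θ d) * (θs (d-1) - θs d)) * hA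
      + ((θs 0 - θs d) * (θ 0 - θ 1) - (θ 0 - θ d) * (θs 0 - θs 1)) * hB
      + ϕ 1 * star
end

section
/- Let d = 2 and let (θ_0,θ_1,θ_2; θ*_0,θ*_1,θ*_2; φ_1,φ_2; ϕ_1,ϕ_2) be a parameter array. Set H = (a_0 − a_2)(θ*_0 − θ*_1)(θ*_1 − θ*_2)/(θ*_0 − θ*_2), where a_0 = θ_0 + φ_1/(θ*_0 − θ*_1) and a_2 = θ_2 + φ_2/(θ*_2 − θ*_1). Then φ_1 = H − (θ_0 − θ_1)(θ*_0 − θ*_1), φ_2 = H − (θ_1 − θ_2)(θ*_1 − θ*_2), ϕ_1 = H + (θ_1 − θ_2)(θ*_0 − θ*_1), and ϕ_2 = H + (θ_0 − θ_1)(θ*_1 − θ*_2). -/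
theorem stmt_5 {K : Type*} [Field K] (P : ParameterArray K 2) :
    let a0 := P.θ 0 + P.φ 1 / (P.θs 0 - P.θs 1)
    let a2 := P.θ 2 + P.φ 2 / (P.θs 2 - P.θs 1)
    let H := (a0 - a2) * (P.θs 0 - P.θs 1) * (P.θs 1 - P.θs 2) / (P.θs 0 - P.θs 2)
    P.φ 1 = H - (P.θ 0 - P.θ 1) * (P.θs 0 - P.θs 1) ∧
    P.φ 2 = H - (P.θ 1 - P.θ 2) * (P.θs 1 - P.θs 2) ∧
    P.ϕ 1 = H + (P.θ 1 - P.θ 2) * (P.θs 0 - P.θs 1) ∧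
    P.ϕ 2 = H + (P.θ 0 - P.θ 1) * (P.θs 1 - P.θs 2) := by
  intro a0 a2 H
  have h02 : P.θ 0 - P.θ 2 ≠ 0 := sub_ne_zero.2 (P.θ_inj 0 2 (by norm_num) (by norm_num) (by norm_num))
  have hs01 : P.θs 0 - P.θs 1 ≠ 0 := sub_ne_zero.2 (P.θs_inj 0 1 (by norm_num) (by norm_num) (by norm_num))
  have hs12 : P.θs 1 - P.θs 2 ≠ 0 := sub_ne_zero.2 (P.θs_inj 1 2 (by norm_num) (by norm_num) (by norm_num))
  have hs02 : P.θs 0 - P.θs 2 ≠ 0 := sub_ne_zero.2 (P.θs_inj 0 2 (by norm_num) (by norm_num) (by norm_num))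
  have hs21 : P.θs 2 - P.θs 1 ≠ 0 := sub_ne_zero.2 (P.θs_inj 2 1 (by norm_num) (by norm_num) (by norm_num))
  have e1 := P.eq_iii 1 (by norm_num) (by norm_num)
  have e2 := P.eq_iii 2 (by norm_num) (by norm_num)
  have f1 := P.eq_iv 1 (by norm_num) (by norm_num)
  have f2 := P.eq_iv 2 (by norm_num) (by norm_num)
  simp only [Finset.sum_range_succ, Finset.sum_range_zero] at e1 e2 f1 f2
  norm_num at e1 e2 f1 f2
  rw [div_self h02] at e1 e2 f1 f2
  have e1' : P.φ 1 = P.ϕ 1 + (P.θs 1 - P.θs 0) * (P.θ 0 - P.θ 2) := by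
    linear_combination e1
  have e2' : P.φ 2 = P.ϕ 1 + (P.θs 2 - P.θs 0) * (P.θ 1 - P.θ 2) := by
    linear_combination e2
  have f1' : P.ϕ 1 = P.φ 1 + (P.θs 1 - P.θs 0) * (P.θ 2 - P.θ 0) := by
    linear_combination f1
  have f2' : P.ϕ 2 = P.φ 1 + (P.θs 2 - P.θs 0) * (P.θ 1 - P.θ 0) := by
    linear_combination f2
  have g2 : P.ϕ 2 = P.ϕ 1 + (P.θs 1 - P.θs 0) * (P.θ 0 - P.θ 2)
      + (P.θs 2 - P.θs 0) * (P.θ 1 - P.θ 0) := by rw [f2', e1']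
  have hH : H = (a0 - a2) * (P.θs 0 - P.θs 1) * (P.θs 1 - P.θs 2) / (P.θs 0 - P.θs 2) := rfl
  have ha0 : a0 = P.θ 0 + P.φ 1 / (P.θs 0 - P.θs 1) := rfl
  have ha2 : a2 = P.θ 2 + P.φ 2 / (P.θs 2 - P.θs 1) := rfl
  refine ⟨?_, ?_, ?_, ?_⟩ <;>
  · rw [hH, ha0, ha2, e1', e2']; try rw [g2]
    field_simp
    ring
end

section
/- Let θ_0, θ_1, θ_2, θ*_0, θ*_1, θ*_2 be scalars in a field K with θ_i ≠ θ_j and θ*_i ≠ θ*_j for i ≠ j, and define φ_1 = −(θ_0 − θ_1)(θ*_0 − θ*_1), φ_2 = −(θ_1 − θ_2)(θ*_1 − θ*_2), ϕ_1 = (θ_1 − θ_2)(θ*_0 − θ*_1), ϕ_2 = (θ_0 − θ_1)(θ*_1 − θ*_2). Then (θ_0,θ_1,θ_2; θ*_0,θ*_1,θ*_2; φ_1,φ_2; ϕ_1,ϕ_2) is a parameter array of diameter 2, and the associated scalars satisfy a_0 = a_2 = θ_1, a_1 = θ_0 − θ_1 + θ_2, a*_0 = a*_2 = θ*_1, a*_1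 = θ*_0 − θ*_1 + θ*_2. -/
theorem stmt_7 {K : Type*} [Field K] (t0 t1 t2 s0 s1 s2 : K)
    (ht01 : t0 ≠ t1) (ht02 : t0 ≠ t2) (ht12 : t1 ≠ t2)
    (hs01 : s0 ≠ s1) (hs02 : s0 ≠ s2) (hs12 : s1 ≠ s2)
    (φ1 φ2 ϕ1 ϕ2 : K)
    (hφ1 : φ1 = -(t0 - t1) * (s0 - s1))
    (hφ2 : φ2 = -(t1 - t2) * (s1 - s2))
    (hϕ1 : ϕ1 = (t1 - t2) * (s0 - s1))
    (hϕ2 : ϕ2 = (t0 - t1) * (s1 - s2)) :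
    (∃ P : ParameterArray K 2,
        P.θ 0 = t0 ∧ P.θ 1 = t1 ∧ P.θ 2 = t2 ∧
        P.θs 0 = s0 ∧ P.θs 1 = s1 ∧ P.θs 2 = s2 ∧
        P.φ 1 = φ1 ∧ P.φ 2 = φ2 ∧ P.ϕ 1 = ϕ1 ∧ P.ϕ 2 = ϕ2) ∧
    t0 + φ1 / (s0 - s1) = t1 ∧
    t2 + φ2 / (s2 - s1) = t1 ∧
    t1 + φ1 / (s1 - s0) - φ2 / (s2 - s1) = t0 - t1 + t2 ∧
    s0 + φ1 / (t0 - t1) = s1 ∧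
    s2 + φ2 / (t2 - t1) = s1 ∧
    s1 + φ1 / (t1 - t0) - φ2 / (t2 - t1) = s0 - s1 + s2 := by
  have ht01' : t0 - t1 ≠ 0 := sub_ne_zero.mpr ht01
  have ht02' : t0 - t2 ≠ 0 := sub_ne_zero.mpr ht02
  have ht12' : t1 - t2 ≠ 0 := sub_ne_zero.mpr ht12
  have hs01' : s0 - s1 ≠ 0 := sub_ne_zero.mpr hs01
  have hs12' : s1 - s2 ≠ 0 := sub_ne_zero.mpr hs12
  have hs01'' : s1 - s0 ≠ 0 := sub_ne_zero.mpr hs01.symm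
  have hs12'' : s2 - s1 ≠ 0 := sub_ne_zero.mpr hs12.symm
  have ht01'' : t1 - t0 ≠ 0 := sub_ne_zero.mpr ht01.symm
  have ht12'' : t2 - t1 ≠ 0 := sub_ne_zero.mpr ht12.symm
  refine ⟨⟨⟨fun i => if i = 0 then t0 else if i = 1 then t1 else t2,
      fun i => if i = 0 then s0 else if i = 1 then s1 else s2,
      fun i => if i = 1 then φ1 else φ2,
      fun i => if i = 1 then ϕ1 else ϕ2, ?_, ?_, ?_, ?_, ?_, ?_, ?_⟩,
      by norm_num, by norm_num, by norm_num, by norm_num, by norm_num, by norm_num,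
      by norm_num, by norm_num, by norm_num, by norm_num⟩, ?_, ?_, ?_, ?_, ?_, ?_⟩
  · intro i h1 h2
    interval_cases i
    · simpa [hφ1] using mul_ne_zero (neg_ne_zero.mpr ht01') hs01'
    · simpa [hφ2] using mul_ne_zero (neg_ne_zero.mpr ht12') hs12'
  · intro i h1 h2
    interval_cases i
    · simpa [hϕ1] using mul_ne_zero ht12' hs01'
    · simpa [hϕ2] using mul_ne_zero ht01' hs12'
  · intro i j hi hj hij
    interval_cases i <;> interval_cases j <;>
      simp_all [eq_comm, ht01, ht02, ht12, ht01.symm, ht02.symm, ht12.symm]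
  · intro i j hi hj hij
    interval_cases i <;> interval_cases j <;>
      simp_all [eq_comm, hs01, hs02, hs12, hs01.symm, hs02.symm, hs12.symm]
  · intro i h1 h2
    interval_cases i
    · simp only [Finset.sum_range_succ, Finset.sum_range_zero]
      norm_num
      rw [hφ1, hϕ1]
      field_simp
      ring
    · simp only [Finset.sum_range_succ, Finset.sum_range_zero]
      norm_num
      rw [hφ2, hϕ1]
      field_simp
      ring
  · intro i h1 h2
    interval_cases i
    · simp only [Finset.sum_range_succ, Finset.sum_range_zero]
      norm_num
      rw [hφ1, hϕ1]
      field_simp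
      ring
    · simp only [Finset.sum_range_succ, Finset.sum_range_zero]
      norm_num
      rw [hφ1, hϕ2]
      field_simp
      ring
  · exact ⟨0, by omega⟩
  · rw [hφ1]; field_simp; try ring
  · rw [hφ2]; field_simp; try ring
  · rw [hφ1, hφ2]; field_simp; try ring
  · rw [hφ1]; field_simp; try ring
  · rw [hφ2]; field_simp; try ring
  · rw [hφ1, hφ2]; field_simp; try ring
end

section
/- Let d ≥ 3, let q be a scalar with q ≠ 0, and suppose θ_i = η + μq^i + hq^{d−i}, θ*_i = η* + μ*q^i + h*q^{d−i} for 0 ≤ i ≤ d, and φ_i = (q^i − 1)(q^{d−i+1} − 1)(τ − μμ*q^{i−1} − hh*q^{d−i}), ϕ_i = (q^i − 1)(q^{d−i+1} − 1)(τ − hμ*q^{i−1} − μh*q^{d−i}) for 1 ≤ i ≤ d. Assume the θ_i are pairwise distinct, the θ*_i are pairwise distinct, and all φ_i, ϕ_i are nonzero. Define a_0 = θ_0 + φ_1/(θ*_0 − θ*_1), a_d = θ_d + φ_d/(θ*_d − θ*_{d−1}), and H = (a_0 − a_d)(θ*_0 − θ*_1)(θ*_{d−1} − θ*_d)/(θ*_0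 − θ*_d). Then H = (q−1)^2((q^{d−1}+1)τ − q^{d−1}(h+μ)(h*+μ*)). -/
/-!
At the two ends of the sequences everything factors: with `a = q ^ (d - 1)`,
`θ*₀ - θ*₁ = (q - 1)(h* a - μ*)`, `θ*_{d-1} - θ*_d = (q - 1)(h* - μ* a)`,
`θ*₀ - θ*_d = (h* - μ*)(q^d - 1)`, `θ₀ - θ_d = (h - μ)(q^d - 1)`, and both `φ₁` and `φ_d` carry the
factor `(q - 1)(q^d - 1)`. After clearing denominators, `(q - 1)^2` comes out and `q^d - 1` cancels,
leaving a polynomial identity in `a` that is divisible by `h* - μ*`.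
-/

section QAffine

variable {K : Type*} [CommRing K] {f : ℕ → K} {c u v q : K} {d : ℕ}

theorem qAffine_sub_zero_one (hf : ∀ i ≤ d, f i = c + u * q ^ i + v * q ^ (d - i)) (hd : 1 ≤ d) :
    f 0 - f 1 = (q - 1) * (v * q ^ (d - 1) - u) := by
  obtain ⟨n, rfl⟩ := Nat.exists_eq_add_of_le' hd
  rw [hf 0 (Nat.zero_le _), hf 1 hd]
  simp only [Nat.sub_zero, Nat.add_sub_cancel]
  ring

theorem qAffine_sub_pred_last (hf : ∀ i ≤ d, f i = c + u * q ^ i + v * q ^ (d - i))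
    (hd : 1 ≤ d) : f (d - 1) - f d = (q - 1) * (v - u * q ^ (d - 1)) := by
  obtain ⟨n, rfl⟩ := Nat.exists_eq_add_of_le' hd
  rw [Nat.add_sub_cancel, hf n (Nat.le_succ n), hf (n + 1) le_rfl]
  simp only [Nat.add_sub_cancel_left, Nat.sub_self]
  ring

theorem qAffine_sub_zero_last (hf : ∀ i ≤ d, f i = c + u * q ^ i + v * q ^ (d - i)) :
    f 0 - f d = (v - u) * (q ^ d - 1) := by
  rw [hf 0 (Nat.zero_le _), hf d le_rfl]
  simp only [Nat.sub_zero, Nat.sub_self]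
  ring

end QAffine

section Phi

variable {K : Type*} [CommRing K] {φ : ℕ → K} {q τ x y : K} {d : ℕ}

theorem phi_one (hφ : ∀ i, 1 ≤ i → i ≤ d →
      φ i = (q ^ i - 1) * (q ^ (d - i + 1) - 1) * (τ - x * q ^ (i - 1) - y * q ^ (d - i)))
    (hd : 1 ≤ d) : φ 1 = (q - 1) * (q ^ d - 1) * (τ - x - y * q ^ (d - 1)) := by
  rw [hφ 1 le_rfl hd, Nat.sub_add_cancel hd]
  simp

theorem phi_last (hφ : ∀ i, 1 ≤ i → i ≤ d →
      φ i = (q ^ i - 1) * (q ^ (d - i + 1) - 1) * (τ - x * q ^ (i - 1) - y * q ^ (d - i)))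
    (hd : 1 ≤ d) : φ d = (q - 1) * (q ^ d - 1) * (τ - x * q ^ (d - 1) - y) := by
  rw [hφ d hd le_rfl]
  simp only [Nat.sub_self, zero_add, pow_one, pow_zero, mul_one]
  ring

end Phi

theorem endpoint_bracket {K : Type*} [CommRing K] (a τ μ h μs hs : K) :
    (h - μ) * (hs * a - μs) * (hs - μs * a) + (τ - μ * μs - h * hs * a) * (hs - μs * a)
        + (τ - μ * μs * a - h * hs) * (hs * a - μs)
      = (hs - μs) * ((a + 1) * τ - a * (h + μ) * (hs + μs)) := by
  ring

theorem stmt_8_general {K : Type*} [Field K] (d : ℕ) (hd : 3 ≤ d)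
    (η μ h ηs μs hs τ q : K)
    (θ θs φ : ℕ → K)
    (hθ : ∀ i, i ≤ d → θ i = η + μ * q ^ i + h * q ^ (d - i))
    (hθs : ∀ i, i ≤ d → θs i = ηs + μs * q ^ i + hs * q ^ (d - i))
    (hφ : ∀ i, 1 ≤ i → i ≤ d →
      φ i = (q ^ i - 1) * (q ^ (d - i + 1) - 1) * (τ - μ * μs * q ^ (i - 1) - h * hs * q ^ (d - i)))
    (hθsinj : ∀ i j, i ≤ d → j ≤ d → i ≠ j → θs i ≠ θs j) :
    ((θ 0 + φ 1 / (θs 0 - θs 1)) - (θ d + φ d / (θs d - θs (d - 1))))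
        * (θs 0 - θs 1) * (θs (d - 1) - θs d) / (θs 0 - θs d)
      = (q - 1) ^ 2 * ((q ^ (d - 1) + 1) * τ - q ^ (d - 1) * (h + μ) * (hs + μs)) := by
  have hd1 : 1 ≤ d := by omega
  have hA : θs 0 - θs 1 ≠ 0 := sub_ne_zero.mpr (hθsinj 0 1 (by omega) hd1 (by omega))
  have hB : θs (d - 1) - θs d ≠ 0 := sub_ne_zero.mpr (hθsinj _ d (by omega) le_rfl (by omega))
  have hC : θs 0 - θs d ≠ 0 := sub_ne_zero.mpr (hθsinj 0 d (by omega) le_rfl (by omega))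
  have hsplit : (θ 0 + φ 1 / (θs 0 - θs 1)) - (θ d + φ d / (θs d - θs (d - 1)))
      = (θ 0 - θ d) + φ 1 / (θs 0 - θs 1) + φ d / (θs (d - 1) - θs d) := by
    rw [← neg_sub (θs (d - 1)), div_neg]; ring
  rw [hsplit]
  field_simp
  rw [qAffine_sub_zero_last hθ, qAffine_sub_zero_last hθs, qAffine_sub_zero_one hθs hd1,
    qAffine_sub_pred_last hθs hd1, phi_one hφ hd1, phi_last hφ hd1]
  linear_combination (q - 1) ^ 2 * (q ^ d - 1) * endpoint_bracket (q ^ (d - 1)) τ μ h μs hs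

theorem stmt_8 {K : Type*} [Field K] (d : ℕ) (hd : 3 ≤ d)
    (η μ h ηs μs hs τ q : K) (hq : q ≠ 0)
    (θ θs φ ϕ : ℕ → K)
    (hθ : ∀ i, i ≤ d → θ i = η + μ * q ^ i + h * q ^ (d - i))
    (hθs : ∀ i, i ≤ d → θs i = ηs + μs * q ^ i + hs * q ^ (d - i))
    (hφ : ∀ i, 1 ≤ i → i ≤ d →
      φ i = (q ^ i - 1) * (q ^ (d - i + 1) - 1) * (τ - μ * μs * q ^ (i - 1) - h * hs * q ^ (d - i)))
    (hϕ : ∀ i, 1 ≤ i → i ≤ d →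
      ϕ i = (q ^ i - 1) * (q ^ (d - i + 1) - 1) * (τ - h * μs * q ^ (i - 1) - μ * hs * q ^ (d - i)))
    (hθinj : ∀ i j, i ≤ d → j ≤ d → i ≠ j → θ i ≠ θ j)
    (hθsinj : ∀ i j, i ≤ d → j ≤ d → i ≠ j → θs i ≠ θs j)
    (hφne : ∀ i, 1 ≤ i → i ≤ d → φ i ≠ 0)
    (hϕne : ∀ i, 1 ≤ i → i ≤ d → ϕ i ≠ 0) :
    ((θ 0 + φ 1 / (θs 0 - θs 1)) - (θ d + φ d / (θs d - θs (d - 1))))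
        * (θs 0 - θs 1) * (θs (d - 1) - θs d) / (θs 0 - θs d)
      = (q - 1) ^ 2 * ((q ^ (d - 1) + 1) * τ - q ^ (d - 1) * (h + μ) * (hs + μs)) :=
  stmt_8_general d hd η μ h ηs μs hs τ q θ θs φ hθ hθs hφ hθsinj
end

section
/- Let d ≥ 3 and q a nonzero scalar with q ≠ 1, q ≠ −1, and q^i ≠ 1 for 1 ≤ i ≤ d. Suppose θ_i = η + μq^i + hq^{d−i} and θ*_i = η* + μ*q^i + h*q^{d−i} with the θ_i pairwise distinct and θ*_i pairwise distinct, and φ_i = (q^i−1)(q^{d−i+1}−1)(τ − μμ*q^{i−1} − hh*q^{d−i}) all nonzero. If (q^{d−1}+1)τ = q^{d−1}(h+μ)(h*+μ*) (i.e. H = 0), then q^{d−1}+1 ≠ 0. -/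
theorem stmt_9 {K : Type*} [Field K] (d : ℕ) (hd : 3 ≤ d)
    (η μ h ηs μs hs τ q : K) (hq : q ≠ 0) (hq1 : q ≠ 1) (hqm1 : q ≠ -1)
    (hqpow : ∀ i, 1 ≤ i → i ≤ d → q ^ i ≠ 1)
    (θ θs φ : ℕ → K)
    (hθ : ∀ i, i ≤ d → θ i = η + μ * q ^ i + h * q ^ (d - i))
    (hθs : ∀ i, i ≤ d → θs i = ηs + μs * q ^ i + hs * q ^ (d - i))
    (hφ : ∀ i, 1 ≤ i → i ≤ d →
      φ i = (q ^ i - 1) * (q ^ (d - i + 1) - 1) * (τ - μ * μs * q ^ (i - 1) - h * hs * q ^ (d - i)))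
    (hθinj : ∀ i j, i ≤ d → j ≤ d → i ≠ j → θ i ≠ θ j)
    (hθsinj : ∀ i j, i ≤ d → j ≤ d → i ≠ j → θs i ≠ θs j)
    (hφne : ∀ i, 1 ≤ i → i ≤ d → φ i ≠ 0)
    (hH : (q ^ (d - 1) + 1) * τ = q ^ (d - 1) * (h + μ) * (hs + μs)) :
    q ^ (d - 1) + 1 ≠ 0 := by
  intro h0
  obtain ⟨e, rfl⟩ : ∃ e, d = e + 1 := ⟨d - 1, by omega⟩
  have he : e + 1 - 1 = e := by omega
  rw [he] at h0 hH
  have hqe : q ^ e = -1 := by linear_combination h0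
  have h01 := hθinj 0 1 (by omega) (by omega) (by norm_num)
  rw [hθ 0 (by omega), hθ 1 (by omega)] at h01
  have hs01 := hθsinj 0 1 (by omega) (by omega) (by norm_num)
  rw [hθs 0 (by omega), hθs 1 (by omega)] at hs01
  simp only [Nat.sub_zero, he, pow_zero, pow_one, pow_succ, hqe] at h01 hs01
  have hμh : μ + h ≠ 0 := fun hc => h01 (by linear_combination (1 - q) * hc)
  have hμhs : μs + hs ≠ 0 := fun hc => hs01 (by linear_combination (1 - q) * hc)
  rw [h0, hqe] at hH
  have : (h + μ) * (hs + μs) = 0 := by linear_combination hH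
  rcases mul_eq_zero.mp this with hc | hc
  · exact hμh (by linear_combination hc)
  · exact hμhs (by linear_combination hc)
end

section
/- Let d ≥ 3, q nonzero with q^i ≠ 1 for 1 ≤ i ≤ d and q^{d−1} + 1 ≠ 0. Suppose θ_i = η + μq^i + hq^{d−i}, θ*_i = η* + μ*q^i + h*q^{d−i} with the θ_i and θ*_i each pairwise distinct, and φ_i = (q^i−1)(q^{d−i+1}−1)(τ − μμ*q^{i−1} − hh*q^{d−i}). If τ = 0 and h + μ = 0, then a_i = η for all 0 ≤ i ≤ d, where a_i = θ_i + φ_i/(θ*_i − θ*_{i−1}) − φ_{i+1}/(θ*_{i+1} − θ*_i) (with φ_0 = φ_{d+1} = 0 and the undefined boundary fractions omitted). -/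
/-!
With `h = -μ` and `τ = 0` the common factor `μ* q^{j-1} - h* q^{d-j}` of `φ_j` is, up to `q - 1`,
exactly `θ*_j - θ*_{j-1}`, so each fraction `φ_j / (θ*_j - θ*_{j-1})` collapses to
`-μ (q^j - 1)(q^{d+1-j} - 1) / (q - 1)`. This expression vanishes at `j = 0` and `j = d + 1`, so it
also accounts for the omitted boundary fractions, and `a_i = η` becomes the identity
`(a q - 1)(b - 1) - (a - 1)(b q - 1) = (q - 1)(b - a)` with `a = q^i`, `b = q^{d-i}`.
-/

section

variable {K : Type*} [Field K]

/-- The common value of `φ_j / (θ*_j - θ*_{j-1})`. Truncated subtraction makes it vanish at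
`j = d + 1` as well as at `j = 0`. -/
def phiQuot (μ q : K) (d j : ℕ) : K :=
  -μ * (q ^ j - 1) * (q ^ (d + 1 - j) - 1) / (q - 1)

lemma phiQuot_zero (μ q : K) (d : ℕ) : phiQuot μ q d 0 = 0 := by
  simp [phiQuot]

lemma phiQuot_succ_self (μ q : K) (d : ℕ) : phiQuot μ q d (d + 1) = 0 := by
  simp [phiQuot]

lemma phiQuot_succ_sub_phiQuot {d i : ℕ} (hi : i ≤ d) {μ q : K} (hq : q ≠ 1) :
    phiQuot μ q d (i + 1) - phiQuot μ q d i = μ * (q ^ i - q ^ (d - i)) := by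
  rw [phiQuot, phiQuot, show d + 1 - i = d - i + 1 by omega, show d + 1 - (i + 1) = d - i by omega,
    div_sub_div_same, div_eq_iff (sub_ne_zero.2 hq)]
  ring

lemma succ_sub_eq_of_geometric {d k : ℕ} (hk : k + 1 ≤ d) {ηs μs hs q : K}
    {θs : ℕ → K} (hθs : ∀ i, i ≤ d → θs i = ηs + μs * q ^ i + hs * q ^ (d - i)) :
    θs (k + 1) - θs k = (q - 1) * (μs * q ^ k - hs * q ^ (d - (k + 1))) := by
  rw [hθs _ hk, hθs _ (by omega), show d - k = d - (k + 1) + 1 by omega]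
  ring

end

theorem stmt_11_general {K : Type*} [Field K] (d : ℕ) (hd : 3 ≤ d)
    (η μ h ηs μs hs τ q : K)
    (hqpow : ∀ i, 1 ≤ i → i ≤ d → q ^ i ≠ 1)
    (θ θs φ : ℕ → K)
    (hθ : ∀ i, i ≤ d → θ i = η + μ * q ^ i + h * q ^ (d - i))
    (hθs : ∀ i, i ≤ d → θs i = ηs + μs * q ^ i + hs * q ^ (d - i))
    (hφ : ∀ i, 1 ≤ i → i ≤ d →
      φ i = (q ^ i - 1) * (q ^ (d - i + 1) - 1) * (τ - μ * μs * q ^ (i - 1) - h * hs * q ^ (d - i)))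
    (hθsinj : ∀ i j, i ≤ d → j ≤ d → i ≠ j → θs i ≠ θs j)
    (hτ : τ = 0) (hhμ : h + μ = 0) :
    ∀ i, i ≤ d →
      θ i + (if i = 0 then 0 else φ i / (θs i - θs (i - 1)))
          - (if i = d then 0 else φ (i + 1) / (θs (i + 1) - θs i))
        = η := by
  have hq : q ≠ 1 := by simpa using hqpow 1 le_rfl (by omega)
  obtain rfl : h = -μ := by linear_combination hhμ
  have frac : ∀ k, k + 1 ≤ d → φ (k + 1) / (θs (k + 1) - θs k) = phiQuot μ q d (k + 1) := by
    intro k hk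
    have hΔ := succ_sub_eq_of_geometric hk hθs
    have hX : μs * q ^ k - hs * q ^ (d - (k + 1)) ≠ 0 := fun h0 ↦
      hθsinj (k + 1) k hk (by omega) (by omega) (sub_eq_zero.1 (by rw [hΔ, h0, mul_zero]))
    rw [hφ (k + 1) (by omega) hk, hΔ, hτ, phiQuot, Nat.add_sub_cancel,
      show d + 1 - (k + 1) = d - (k + 1) + 1 by omega,
      div_eq_div_iff (mul_ne_zero (sub_ne_zero.2 hq) hX) (sub_ne_zero.2 hq)]
    ring
  intro i hi
  have left : (if i = 0 then 0 else φ i / (θs i - θs (i - 1))) = phiQuot μ q d i := by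
    split_ifs with h0
    · rw [h0, phiQuot_zero]
    · obtain ⟨k, rfl⟩ : ∃ k, i = k + 1 := ⟨i - 1, by omega⟩
      exact frac k hi
  have right : (if i = d then 0 else φ (i + 1) / (θs (i + 1) - θs i)) = phiQuot μ q d (i + 1) := by
    split_ifs with hid
    · rw [hid, phiQuot_succ_self]
    · exact frac i (by omega)
  rw [left, right, hθ i hi]
  linear_combination -phiQuot_succ_sub_phiQuot hi hq (μ := μ)

theorem stmt_11 {K : Type*} [Field K] (d : ℕ) (hd : 3 ≤ d)
    (η μ h ηs μs hs τ q : K) (hq : q ≠ 0)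
    (hqpow : ∀ i, 1 ≤ i → i ≤ d → q ^ i ≠ 1)
    (hqd1 : q ^ (d - 1) + 1 ≠ 0)
    (θ θs φ : ℕ → K)
    (hθ : ∀ i, i ≤ d → θ i = η + μ * q ^ i + h * q ^ (d - i))
    (hθs : ∀ i, i ≤ d → θs i = ηs + μs * q ^ i + hs * q ^ (d - i))
    (hφ : ∀ i, 1 ≤ i → i ≤ d →
      φ i = (q ^ i - 1) * (q ^ (d - i + 1) - 1) * (τ - μ * μs * q ^ (i - 1) - h * hs * q ^ (d - i)))
    (hθinj : ∀ i j, i ≤ d → j ≤ d → i ≠ j → θ i ≠ θ j)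
    (hθsinj : ∀ i j, i ≤ d → j ≤ d → i ≠ j → θs i ≠ θs j)
    (hτ : τ = 0) (hhμ : h + μ = 0) :
    ∀ i, i ≤ d →
      θ i + (if i = 0 then 0 else φ i / (θs i - θs (i - 1)))
          - (if i = d then 0 else φ (i + 1) / (θs (i + 1) - θs i))
        = η :=
  stmt_11_general d hd η μ h ηs μs hs τ q hqpow θ θs φ hθ hθs hφ hθsinj hτ hhμ
end

section
/- Let d ≥ 3 and suppose char K ≠ 2, θ_i = η + μ(i − d/2) + hi(d−i), θ*_i = η* + μ*(i − d/2) + h*i(d−i) for 0 ≤ i ≤ d with the θ_i pairwise distinct and θ*_i pairwise distinct, and φ_i = i(d−i+1)(τ − μμ*/2 + (hμ* + μh*)(i − (d+1)/2) + hh*(i−1)(d−i)) all nonzero for 1 ≤ i ≤ d. Define a_0 = θ_0 + φ_1/(θ*_0 − θ*_1), a_d = θ_d + φ_d/(θ*_d − θ*_{d−1}), and H = (a_0 − a_d)(θ*_0 − θ*_1)(θ*_{d−1} − θ*_d)/(θ*_0 − θ*_d). Then H = 2τ + hh*(d−1)^2. -/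
/-!
Both θ and θ* are quadratic in i, so the differences θ*₀ − θ*₁ = −(μ* + h*(d−1)),
θ*_{d−1} − θ*_d = h*(d−1) − μ*, θ*₀ − θ*_d = −μ*d and θ₀ − θ_d = −μd are linear, while
φ₁ and φ_d differ only in the sign of the term (hμ* + μh*)(d−1)/2. Clearing the denominators
of a₀ and a_d, the numerator of H collapses to −μ*d (2τ + hh*(d−1)²), and the factor −μ*d
is exactly θ*₀ − θ*_d.
-/

section
variable {K : Type*} [Field K]

/-- `θ` is `quadraticSeq η μ h d` and `θ*` is `quadraticSeq η* μ* h* d`. -/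
def quadraticSeq (η μ h : K) (d i : ℕ) : K :=
  η + μ * ((i : K) - (d : K) / 2) + h * (i : K) * ((d : K) - (i : K))

def splitSeq (μ h μs hs τ : K) (d i : ℕ) : K :=
  (i : K) * ((d : K) - (i : K) + 1)
    * (τ - μ * μs / 2 + (h * μs + μ * hs) * ((i : K) - ((d : K) + 1) / 2)
      + h * hs * ((i : K) - 1) * ((d : K) - (i : K)))

variable (η μ h μs hs τ : K) (d : ℕ)

lemma quadraticSeq_zero_sub_one :
    quadraticSeq η μ h d 0 - quadraticSeq η μ h d 1 = -(μ + h * ((d : K) - 1)) := by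
  simp only [quadraticSeq]
  push_cast
  ring

lemma quadraticSeq_pred_sub_self (hd : 1 ≤ d) :
    quadraticSeq η μ h d (d - 1) - quadraticSeq η μ h d d = h * ((d : K) - 1) - μ := by
  simp only [quadraticSeq]
  push_cast [hd]
  ring

lemma quadraticSeq_zero_sub_self :
    quadraticSeq η μ h d 0 - quadraticSeq η μ h d d = -(μ * d) := by
  simp only [quadraticSeq]
  push_cast
  ring

lemma splitSeq_one (h2 : (2 : K) ≠ 0) :
    splitSeq μ h μs hs τ d 1
      = d * (τ - μ * μs / 2 - (h * μs + μ * hs) * ((d : K) - 1) / 2) := by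
  simp only [splitSeq]
  push_cast
  field_simp
  ring

lemma splitSeq_self (h2 : (2 : K) ≠ 0) :
    splitSeq μ h μs hs τ d d
      = d * (τ - μ * μs / 2 + (h * μs + μ * hs) * ((d : K) - 1) / 2) := by
  simp only [splitSeq]
  field_simp
  ring

lemma add_div_sub_add_div_mul_mul_div {x y p q A B C : K}
    (hA : A ≠ 0) (hB : B ≠ 0) :
    (x + p / A - (y + q / -B)) * A * B / C = ((x - y) * A * B + p * B + q * A) / C := by
  field_simp
  ring

omit d in
lemma split_numerator_eq (h2 : (2 : K) ≠ 0) (d : K) :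
    -(μ * d) * -(μs + hs * (d - 1)) * (hs * (d - 1) - μs)
        + d * (τ - μ * μs / 2 - (h * μs + μ * hs) * (d - 1) / 2) * (hs * (d - 1) - μs)
        + d * (τ - μ * μs / 2 + (h * μs + μ * hs) * (d - 1) / 2) * -(μs + hs * (d - 1))
      = -(μs * d) * (2 * τ + h * hs * (d - 1) ^ 2) := by
  field_simp
  ring

end

theorem stmt_12_general {K : Type*} [Field K] (d : ℕ) (hd : 3 ≤ d)
    (hchar : (2 : K) ≠ 0)
    (η μ h ηs μs hs τ : K)
    (θ θs φ : ℕ → K)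
    (hθ : ∀ i, i ≤ d →
      θ i = η + μ * ((i : K) - (d : K) / 2) + h * (i : K) * ((d : K) - (i : K)))
    (hθs : ∀ i, i ≤ d →
      θs i = ηs + μs * ((i : K) - (d : K) / 2) + hs * (i : K) * ((d : K) - (i : K)))
    (hφ : ∀ i, 1 ≤ i → i ≤ d →
      φ i = (i : K) * ((d : K) - (i : K) + 1)
        * (τ - μ * μs / 2 + (h * μs + μ * hs) * ((i : K) - ((d : K) + 1) / 2)
            + h * hs * ((i : K) - 1) * ((d : K) - (i : K))))
    (hθsinj : ∀ i j, i ≤ d → j ≤ d → i ≠ j → θs i ≠ θs j) :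
    ((θ 0 + φ 1 / (θs 0 - θs 1)) - (θ d + φ d / (θs d - θs (d - 1))))
        * (θs 0 - θs 1) * (θs (d - 1) - θs d) / (θs 0 - θs d)
      = 2 * τ + h * hs * ((d : K) - 1) ^ 2 := by
  have hθs_ne (i j : ℕ) (hi : i ≤ d) (hj : j ≤ d) (hij : i ≠ j) : θs i - θs j ≠ 0 :=
    sub_ne_zero.mpr (hθsinj i j hi hj hij)
  have hA := hθs_ne 0 1 (by omega) (by omega) (by omega)
  have hB := hθs_ne (d - 1) d (by omega) le_rfl (by omega)
  have hC := hθs_ne 0 d (by omega) le_rfl (by omega)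
  rw [← neg_sub (θs (d - 1)), add_div_sub_add_div_mul_mul_div hA hB, div_eq_iff hC]
  replace hθ : ∀ i ≤ d, θ i = quadraticSeq η μ h d i := hθ
  replace hθs : ∀ i ≤ d, θs i = quadraticSeq ηs μs hs d i := hθs
  replace hφ : ∀ i, 1 ≤ i → i ≤ d → φ i = splitSeq μ h μs hs τ d i := hφ
  rw [hθ 0 (by omega), hθ d le_rfl, hθs 0 (by omega), hθs 1 (by omega), hθs (d - 1) (by omega),
    hθs d le_rfl, hφ 1 le_rfl (by omega), hφ d (by omega) le_rfl]
  rw [quadraticSeq_zero_sub_self η μ h d, quadraticSeq_zero_sub_one ηs μs hs d,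
    quadraticSeq_pred_sub_self ηs μs hs d (by omega), quadraticSeq_zero_sub_self ηs μs hs d,
    splitSeq_one μ h μs hs τ d hchar, splitSeq_self μ h μs hs τ d hchar]
  linear_combination split_numerator_eq μ h μs hs τ hchar (d : K)

theorem stmt_12 {K : Type*} [Field K] (d : ℕ) (hd : 3 ≤ d)
    (hchar : (2 : K) ≠ 0)
    (η μ h ηs μs hs τ : K)
    (θ θs φ : ℕ → K)
    (hθ : ∀ i, i ≤ d →
      θ i = η + μ * ((i : K) - (d : K) / 2) + h * (i : K) * ((d : K) - (i : K)))
    (hθs : ∀ i, i ≤ d →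
      θs i = ηs + μs * ((i : K) - (d : K) / 2) + hs * (i : K) * ((d : K) - (i : K)))
    (hφ : ∀ i, 1 ≤ i → i ≤ d →
      φ i = (i : K) * ((d : K) - (i : K) + 1)
        * (τ - μ * μs / 2 + (h * μs + μ * hs) * ((i : K) - ((d : K) + 1) / 2)
            + h * hs * ((i : K) - 1) * ((d : K) - (i : K))))
    (hθinj : ∀ i j, i ≤ d → j ≤ d → i ≠ j → θ i ≠ θ j)
    (hθsinj : ∀ i j, i ≤ d → j ≤ d → i ≠ j → θs i ≠ θs j)
    (hφne : ∀ i, 1 ≤ i → i ≤ d → φ i ≠ 0) :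
    ((θ 0 + φ 1 / (θs 0 - θs 1)) - (θ d + φ d / (θs d - θs (d - 1))))
        * (θs 0 - θs 1) * (θs (d - 1) - θs d) / (θs 0 - θs d)
      = 2 * τ + h * hs * ((d : K) - 1) ^ 2 :=
  stmt_12_general d hd hchar η μ h ηs μs hs τ θ θs φ hθ hθs hφ hθsinj
end

section
/- Let d ≥ 3 with d even and char K ≠ 2. Suppose θ_i equals η + s + h(i − d/2) if i is even and η − s − h(i − d/2) if i is odd, θ*_i equals η* + s* + h*(i − d/2) if i is even and η* − s* − h*(i − d/2) if i is odd (0 ≤ i ≤ d), with the θ_i pairwise distinct and θ*_i pairwise distinct, and φ_i equals i(τ − sh* − s*h − hh*(i − (d+1)/2)) if i is even and (d−i+1)(τ + sh* + s*h + hh*(i − (d+1)/2)) if i is odd, all nonzero (1 ≤ i ≤ d). Define a_0 = θ_0 + φ_1/(θ*_0 − θ*_1), a_d = θ_d + φ_d/(θ*_d − θ*_{d−1}), and H = (a_0 − a_d)(θ*_0 − θ*_1)(θ*_{d−1} − θ*_d)/(θ*_0 − θ*_d). Then H = 2(d−1)τ + 4ss*. -/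
theorem stmt_15 {K : Type*} [Field K] (d : ℕ) (hd : 3 ≤ d) (hdeven : Even d)
    (hchar : (2 : K) ≠ 0)
    (η h s ηs hs ss τ : K)
    (θ θs φ : ℕ → K)
    (hθ : ∀ i, i ≤ d →
      θ i = if Even i then η + s + h * ((i : K) - (d : K) / 2)
            else η - s - h * ((i : K) - (d : K) / 2))
    (hθs : ∀ i, i ≤ d →
      θs i = if Even i then ηs + ss + hs * ((i : K) - (d : K) / 2)
             else ηs - ss - hs * ((i : K) - (d : K) / 2))
    (hφ : ∀ i, 1 ≤ i → i ≤ d →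
      φ i = if Even i then
              (i : K) * (τ - s * hs - ss * h - h * hs * ((i : K) - ((d : K) + 1) / 2))
            else
              ((d : K) - (i : K) + 1) * (τ + s * hs + ss * h + h * hs * ((i : K) - ((d : K) + 1) / 2)))
    (hθinj : ∀ i j, i ≤ d → j ≤ d → i ≠ j → θ i ≠ θ j)
    (hθsinj : ∀ i j, i ≤ d → j ≤ d → i ≠ j → θs i ≠ θs j)
    (hφne : ∀ i, 1 ≤ i → i ≤ d → φ i ≠ 0) :
    ((θ 0 + φ 1 / (θs 0 - θs 1)) - (θ d + φ d / (θs d - θs (d - 1))))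
        * (θs 0 - θs 1) * (θs (d - 1) - θs d) / (θs 0 - θs d)
      = 2 * ((d : K) - 1) * τ + 4 * s * ss := by
  have hd1 : 1 ≤ d := by omega
  have hdm1 : d - 1 ≤ d := by omega
  have hodd : ¬ Even (d - 1) := by
    simp [Nat.even_sub hd1, hdeven]
  have hcast : ((d - 1 : ℕ) : K) = (d : K) - 1 := by
    push_cast [Nat.cast_sub hd1]; ring
  have e0 : θs 0 = ηs + ss + hs * ((0 : K) - (d : K) / 2) := by
    rw [hθs 0 (by omega)]; simp
  have e1 : θs 1 = ηs - ss - hs * ((1 : K) - (d : K) / 2) := by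
    rw [hθs 1 (by omega)]; simp
  have edm : θs (d - 1) = ηs - ss - hs * (((d : K) - 1) - (d : K) / 2) := by
    rw [hθs (d - 1) hdm1, if_neg hodd, hcast]
  have ed : θs d = ηs + ss + hs * ((d : K) - (d : K) / 2) := by
    rw [hθs d le_rfl, if_pos hdeven]
  have t0 : θ 0 = η + s + h * ((0 : K) - (d : K) / 2) := by
    rw [hθ 0 (by omega)]; simp
  have td : θ d = η + s + h * ((d : K) - (d : K) / 2) := by
    rw [hθ d le_rfl, if_pos hdeven]
  have f1 : φ 1 = ((d : K) - 1 + 1) * (τ + s * hs + ss * h + h * hs * ((1 : K) - ((d : K) + 1) / 2)) := by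
    rw [hφ 1 le_rfl (by omega)]; norm_num
  have fd : φ d = (d : K) * (τ - s * hs - ss * h - h * hs * ((d : K) - ((d : K) + 1) / 2)) := by
    rw [hφ d hd1 le_rfl, if_pos hdeven]
  have hA : θs 0 - θs 1 ≠ 0 := sub_ne_zero.mpr (hθsinj 0 1 (by omega) (by omega) (by omega))
  have hB : θs d - θs (d - 1) ≠ 0 := sub_ne_zero.mpr (hθsinj d (d - 1) le_rfl hdm1 (by omega))
  have hC : θs 0 - θs d ≠ 0 := sub_ne_zero.mpr (hθsinj 0 d (by omega) le_rfl (by omega))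
  simp only [e0, e1, edm, ed] at hA hB hC
  rw [e0, e1, edm, ed, t0, td, f1, fd]
  rw [div_eq_iff hC]
  have ha := div_mul_cancel₀
    (((d : K) - 1 + 1) * (τ + s * hs + ss * h + h * hs * ((1 : K) - ((d : K) + 1) / 2))) hA
  have hb := div_mul_cancel₀
    ((d : K) * (τ - s * hs - ss * h - h * hs * ((d : K) - ((d : K) + 1) / 2))) hB
  have h2 : (2 : K) * 2⁻¹ = 1 := mul_inv_cancel₀ hchar
  have h4 : (4 : K) * 4⁻¹ = 1 := mul_inv_cancel₀ (by
    have : (4 : K) = 2 * 2 := by norm_num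
    rw [this]; exact mul_ne_zero hchar hchar)
  have hxy : ((2 : K)⁻¹) ^ 2 = (4 : K)⁻¹ := by
    rw [inv_pow]; norm_num
  linear_combination
    (ηs - ss - hs * ((d : K) - 1 - (d : K) / 2) - (ηs + ss + hs * ((d : K) - (d : K) / 2))) * ha
    + (ηs + ss + hs * ((0 : K) - (d : K) / 2) - (ηs - ss - hs * ((1 : K) - (d : K) / 2))) * hb
    + (2 * s * (d : K) ^ 2 * hs ^ 2 + 2 * h * (d : K) * hs * ss + 2 * h * (d : K) ^ 2 * hs ^ 2) * h2
    - (h * (d : K) ^ 2 * hs ^ 2) * h4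
    - (4 * h * (d : K) ^ 2 * hs ^ 2) * hxy
end

section
/- With notation as in the even-d, q = −1 case (θ_i, θ*_i, φ_i, ϕ_i given by the split formulas with parameters η, h, s, η*, h*, s*, τ), for 1 ≤ i ≤ d one has: φ_i + ϕ_i = 2i(τ − sh*) if i is even and 2(d−i+1)(τ + sh*) if i is odd; and φ_i + ϕ_{d−i+1} = 2i(τ − s*h) if i is even and 2(d−i+1)(τ + s*h) if i is odd. Consequently, if φ_i + ϕ_i = 0 for all 1 ≤ i ≤ d and char K ≠ 2, then τ = 0 and sh* = 0. -/
theorem stmt_16 {K : Type*} [Field K] (d : ℕ) (hd : 3 ≤ d) (hdeven : Even d)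
    (hchar : (2 : K) ≠ 0)
    (η h s ηs hs ss τ : K)
    (φ ϕ : ℕ → K)
    (hφ : ∀ i, 1 ≤ i → i ≤ d →
      φ i = if Even i then
              (i : K) * (τ - s * hs - ss * h - h * hs * ((i : K) - ((d : K) + 1) / 2))
            else
              ((d : K) - (i : K) + 1) * (τ + s * hs + ss * h + h * hs * ((i : K) - ((d : K) + 1) / 2)))
    (hϕ : ∀ i, 1 ≤ i → i ≤ d →
      ϕ i = if Even i then
              (i : K) * (τ - s * hs + ss * h + h * hs * ((i : K) - ((d : K) + 1) / 2))
            else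
              ((d : K) - (i : K) + 1) * (τ + s * hs - ss * h - h * hs * ((i : K) - ((d : K) + 1) / 2)))
    (hφne : ∀ i, 1 ≤ i → i ≤ d → φ i ≠ 0) :
    (∀ i, 1 ≤ i → i ≤ d →
        φ i + ϕ i
          = if Even i then 2 * (i : K) * (τ - s * hs)
            else 2 * ((d : K) - (i : K) + 1) * (τ + s * hs)) ∧
    (∀ i, 1 ≤ i → i ≤ d →
        φ i + ϕ (d - i + 1)
          = if Even i then 2 * (i : K) * (τ - ss * h)
            else 2 * ((d : K) - (i : K) + 1) * (τ + ss * h)) ∧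
    ((∀ i, 1 ≤ i → i ≤ d → φ i + ϕ i = 0) → τ = 0 ∧ s * hs = 0) := by
  have P1 : ∀ i, 1 ≤ i → i ≤ d →
      φ i + ϕ i
        = if Even i then 2 * (i : K) * (τ - s * hs)
          else 2 * ((d : K) - (i : K) + 1) * (τ + s * hs) := by
    intro i h1 h2
    rw [hφ i h1 h2, hϕ i h1 h2]
    by_cases he : Even i <;> simp only [he, if_true, if_false] <;> ring
  refine ⟨P1, ?_, ?_⟩
  · intro i h1 h2
    have hj1 : 1 ≤ d - i + 1 := by omega
    have hj2 : d - i + 1 ≤ d := by omega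
    have hje : Even (d - i + 1) ↔ ¬ Even i := by
      rcases hdeven with ⟨k, hk⟩
      simp only [Nat.even_iff]
      omega
    have hc : ((d - i + 1 : ℕ) : K) = (d : K) - (i : K) + 1 := by
      push_cast [Nat.cast_sub h2]
      ring
    rw [hφ i h1 h2, hϕ _ hj1 hj2, hc]
    by_cases he : Even i
    · have hje' : ¬ Even (d - i + 1) := by simp [hje, he]
      simp only [he, hje', if_true, if_false]
      field_simp
      ring
    · have hje' : Even (d - i + 1) := hje.mpr he
      simp only [he, hje', if_true, if_false]
      field_simp
      ring
  · intro hall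
    have e2 : (2 : K) * 2 * (τ - s * hs) = 0 := by
      have := (P1 2 (by omega) (by omega)).symm.trans (hall 2 (by omega) (by omega))
      simpa using this
    have e1 : (2 : K) * ((d : K) - 1 + 1) * (τ + s * hs) = 0 := by
      have := (P1 1 (by omega) (by omega)).symm.trans (hall 1 (by omega) (by omega))
      simpa using this
    have hdK : ((d : K)) ≠ 0 := by
      intro hdk
      have h1d : (1 : ℕ) ≤ d := by omega
      apply hφne 1 le_rfl h1d
      rw [hφ 1 le_rfl h1d]
      norm_num [hdk]
    have ha : τ - s * hs = 0 :=
      (mul_eq_zero.mp e2).resolve_left (mul_ne_zero hchar hchar)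
    have hb : τ + s * hs = 0 := by
      rcases mul_eq_zero.mp e1 with hx | hx
      · rcases mul_eq_zero.mp hx with hy | hy
        · exact absurd hy hchar
        · rw [sub_add_cancel] at hy; exact absurd hy hdK
      · exact hx
    constructor
    · have : 2 * τ = 0 := by linear_combination ha + hb
      rcases mul_eq_zero.mp this with hx | hx
      · exact absurd hx hchar
      · exact hx
    · have : 2 * (s * hs) = 0 := by linear_combination hb - ha
      rcases mul_eq_zero.mp this with hx | hx
      · exact absurd hx hchar
      · exact hx
end
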